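/- arXiv:1307.0655 — 12 statements merged into one kernel-verified Lean document; each statement's English description precedes it below -/
import Mathlib

section
/- If μ : (0,1) → ℝ satisfies μ(xy) = μ(x)μ(y) for all x, y ∈ (0,1) with xy ∈ (0,1), μ extends to a multiplicative function on [0,∞), and μ(x) = μ(1−x) for all x ∈ (0,1), then either μ ≡ 1 on (0,1) or μ ≡ 0 on (0,1). -/
/-!
Pass to the multiplicative extension `ν` on `[0, ∞)`. Since `ν 1 = ν 1 ^ 2`, either `ν 1 = 0`,
and then `ν x = ν x * ν 1 = 0`, or `ν 1 = 1`, and then `ν` has no zeros on `(0, ∞)`.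
In the second case, applying `ν` to `(1 - x)(1 + x) = 1 - x²` and using symmetry twice gives
`ν (1 + x) = ν x` on `(0, 1)`. For `y < 1/2` the point `x = y / (1 - y)` lies in `(0, 1)` and
satisfies `y (1 + x) = x`, so `ν y = 1`. Symmetry extends this to `(1/2, 1)`, and
`1/2 = (2/5)(1 + 1/4)` settles the midpoint.
-/

open Set

def MulOnNonneg (ν : ℝ → ℝ) : Prop :=
  ∀ x y : ℝ, 0 ≤ x → 0 ≤ y → ν (x * y) = ν x * ν y

namespace MulOnNonneg

variable {ν : ℝ → ℝ}

theorem map_one_eq_zero_or_one (hν : MulOnNonneg ν) : ν 1 = 0 ∨ ν 1 = 1 := by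
  have h := hν 1 1 zero_le_one zero_le_one
  rw [mul_one] at h
  rcases mul_eq_zero.mp (by linear_combination -h : ν 1 * (ν 1 - 1) = 0) with h0 | h1
  · exact .inl h0
  · exact .inr (sub_eq_zero.mp h1)

theorem eq_zero_of_map_one_eq_zero (hν : MulOnNonneg ν) (h0 : ν 1 = 0) {x : ℝ} (hx : 0 ≤ x) :
    ν x = 0 := by
  simpa [h0] using hν x 1 hx zero_le_one

theorem map_ne_zero (hν : MulOnNonneg ν) (h1 : ν 1 = 1) {x : ℝ} (hx : 0 < x) : ν x ≠ 0 := by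
  have h := hν x x⁻¹ hx.le (inv_nonneg.mpr hx.le)
  rw [mul_inv_cancel₀ hx.ne', h1] at h
  exact left_ne_zero_of_mul_eq_one h.symm

theorem map_one_add_of_symm (hν : MulOnNonneg ν) (h1 : ν 1 = 1)
    (hsym : ∀ x ∈ Ioo (0 : ℝ) 1, ν (1 - x) = ν x) {x : ℝ} (hx : x ∈ Ioo (0 : ℝ) 1) :
    ν (1 + x) = ν x := by
  obtain ⟨hx0, hx1⟩ := hx
  have hsq : x * x ∈ Ioo (0 : ℝ) 1 := ⟨mul_pos hx0 hx0, by nlinarith⟩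
  have hprod : ν (1 - x) * ν (1 + x) = ν x * ν x := by
    rw [← hν _ _ (by linarith) (by linarith), ← hν _ _ hx0.le hx0.le,
      show (1 - x) * (1 + x) = 1 - x * x by ring, hsym _ hsq]
  rw [hsym x ⟨hx0, hx1⟩] at hprod
  exact mul_left_cancel₀ (hν.map_ne_zero h1 hx0) hprod

theorem eq_one_of_symm_of_lt_half (hν : MulOnNonneg ν) (h1 : ν 1 = 1)
    (hsym : ∀ x ∈ Ioo (0 : ℝ) 1, ν (1 - x) = ν x) {y : ℝ} (hy0 : 0 < y) (hy : y < 1 / 2) :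
    ν y = 1 := by
  have h1y : 0 < 1 - y := by linarith
  set x := y / (1 - y) with hx_def
  have hx : x ∈ Ioo (0 : ℝ) 1 := ⟨div_pos hy0 h1y, by rw [div_lt_one h1y]; linarith⟩
  have hyx : y * (1 + x) = x := by rw [hx_def]; field_simp; ring
  have h := hν y (1 + x) hy0.le (by linarith [hx.1])
  rw [hyx, hν.map_one_add_of_symm h1 hsym hx] at h
  exact mul_right_cancel₀ (hν.map_ne_zero h1 hx.1) (by rw [one_mul]; exact h.symm)

theorem eq_one_on_Ioo_of_symm (hν : MulOnNonneg ν) (h1 : ν 1 = 1)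
    (hsym : ∀ x ∈ Ioo (0 : ℝ) 1, ν (1 - x) = ν x) {x : ℝ} (hx : x ∈ Ioo (0 : ℝ) 1) :
    ν x = 1 := by
  have hsmall (y : ℝ) := hν.eq_one_of_symm_of_lt_half h1 hsym (y := y)
  rcases lt_trichotomy x (1 / 2) with h | rfl | h
  · exact hsmall x hx.1 h
  · have hquarter : ν (1 + 1 / 4) = 1 := by
      rw [hν.map_one_add_of_symm h1 hsym (by norm_num)]
      exact hsmall _ (by norm_num) (by norm_num)
    have h := hν (2 / 5) (1 + 1 / 4) (by norm_num) (by norm_num)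
    rwa [show (2 / 5 : ℝ) * (1 + 1 / 4) = 1 / 2 by norm_num, hquarter,
      hsmall (2 / 5) (by norm_num) (by norm_num), mul_one] at h
  · rw [← hsym x hx]
    exact hsmall _ (by linarith [hx.2]) (by linarith)

end MulOnNonneg

theorem stmt_0_general (μ : ℝ → ℝ)
    (hext : ∃ ν : ℝ → ℝ, (∀ x y : ℝ, 0 ≤ x → 0 ≤ y → ν (x * y) = ν x * ν y) ∧
      ∀ x ∈ Ioo (0:ℝ) 1, ν x = μ x)
    (hsym : ∀ x ∈ Ioo (0:ℝ) 1, μ x = μ (1 - x)) :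
    (∀ x ∈ Ioo (0:ℝ) 1, μ x = 1) ∨ (∀ x ∈ Ioo (0:ℝ) 1, μ x = 0) := by
  obtain ⟨ν, hν, hνμ⟩ := hext
  have hν : MulOnNonneg ν := hν
  have hνsym : ∀ x ∈ Ioo (0 : ℝ) 1, ν (1 - x) = ν x := fun x hx => by
    have hx' : 1 - x ∈ Ioo (0 : ℝ) 1 := ⟨by linarith [hx.2], by linarith [hx.1]⟩
    rw [hνμ x hx, hνμ _ hx', hsym x hx]
  rcases hν.map_one_eq_zero_or_one with h0 | h1
  · exact .inr fun x hx => hνμ x hx ▸ hν.eq_zero_of_map_one_eq_zero h0 hx.1.le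
  · exact .inl fun x hx => hνμ x hx ▸ hν.eq_one_on_Ioo_of_symm h1 hνsym hx

theorem stmt_0 (μ : ℝ → ℝ)
    (hmul : ∀ x ∈ Ioo (0:ℝ) 1, ∀ y ∈ Ioo (0:ℝ) 1, x * y ∈ Ioo (0:ℝ) 1 →
      μ (x * y) = μ x * μ y)
    (hext : ∃ ν : ℝ → ℝ, (∀ x y : ℝ, 0 ≤ x → 0 ≤ y → ν (x * y) = ν x * ν y) ∧
      ∀ x ∈ Ioo (0:ℝ) 1, ν x = μ x)
    (hsym : ∀ x ∈ Ioo (0:ℝ) 1, μ x = μ (1 - x)) :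
    (∀ x ∈ Ioo (0:ℝ) 1, μ x = 1) ∨ (∀ x ∈ Ioo (0:ℝ) 1, μ x = 0) :=
  stmt_0_general μ hext hsym
end

section
/- If μ : [0,∞) → ℝ is multiplicative (μ(xy) = μ(x)μ(y) for all x, y ≥ 0) and satisfies μ(p/(p+q)) = μ(q/(p+q)) for all p, q > 0, then μ is identically 0 or identically 1 on (0,∞). -/
/-!
Since `μ 1 = μ 1 * μ 1`, either `μ 1 = 0`, and then `μ x = μ x * μ 1 = 0`, or `μ 1 = 1`. In the
latter case `μ` takes nonzero values at reciprocals of positive numbers, and the symmetry condition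
with `(p, q) = (x, 1)` reads `μ x * μ (x + 1)⁻¹ = μ (x + 1)⁻¹`, so `μ x = 1`.
-/

section MulOnNonneg

variable {M₀ : Type*} [MonoidWithZero M₀] {μ : ℝ → M₀}
  (hmul : ∀ x y : ℝ, 0 ≤ x → 0 ≤ y → μ (x * y) = μ x * μ y)
include hmul

theorem map_one_eq_zero_or_one_of_mul [IsLeftCancelMulZero M₀] : μ 1 = 0 ∨ μ 1 = 1 :=
  IsIdempotentElem.iff_eq_zero_or_one.mp <| show μ 1 * μ 1 = μ 1 by
    rw [← hmul 1 1 zero_le_one zero_le_one, mul_one]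

theorem eq_zero_of_mul_of_map_one_eq_zero (h1 : μ 1 = 0) {x : ℝ} (hx : 0 ≤ x) : μ x = 0 := by
  simpa [h1] using hmul x 1 hx zero_le_one

theorem map_inv_ne_zero_of_mul [Nontrivial M₀] (h1 : μ 1 = 1) {x : ℝ} (hx : 0 < x) : μ x⁻¹ ≠ 0 := by
  intro h
  have := hmul x x⁻¹ hx.le (inv_nonneg.mpr hx.le)
  rw [mul_inv_cancel₀ hx.ne', h, h1, mul_zero] at this
  exact one_ne_zero this

end MulOnNonneg

theorem stmt_1 (μ : ℝ → ℝ)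
    (hmul : ∀ x y : ℝ, 0 ≤ x → 0 ≤ y → μ (x * y) = μ x * μ y)
    (hsym : ∀ p q : ℝ, 0 < p → 0 < q → μ (p / (p + q)) = μ (q / (p + q))) :
    (∀ x : ℝ, 0 < x → μ x = 0) ∨ (∀ x : ℝ, 0 < x → μ x = 1) := by
  refine (map_one_eq_zero_or_one_of_mul hmul).imp
    (fun h1 x hx ↦ eq_zero_of_mul_of_map_one_eq_zero hmul h1 hx.le) fun h1 x hx ↦ ?_
  have hx1 : 0 < x + 1 := by linarith
  have hs := hsym x 1 hx one_pos
  rw [div_eq_mul_inv, one_div, hmul x _ hx.le (inv_nonneg.mpr hx1.le)] at hs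
  exact mul_right_cancel₀ (map_inv_ne_zero_of_mul hmul h1 hx1) (by rw [hs, one_mul])
end

section
/- If l : (0,∞) → ℝ satisfies l(xy) = l(x) + l(y) for all x, y > 0, and l(x) = l(1−x) for all x ∈ (0,1), then l ≡ 0 on (0,∞). -/
/-! The points `x / (1 + x)` and `1 / (1 + x)` are symmetric about `1 / 2`, and a logarithmic
function sends them to `l x - l (1 + x)` and `l 1 - l (1 + x)`; hence `l x = l 1 = 0`. -/

open Set

theorem map_one_of_map_mul_pos {l : ℝ → ℝ}
    (hlog : ∀ x y : ℝ, 0 < x → 0 < y → l (x * y) = l x + l y) : l 1 = 0 := by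
  have h := hlog 1 1 one_pos one_pos
  rw [one_mul] at h
  linarith

theorem map_div_of_map_mul_pos {l : ℝ → ℝ}
    (hlog : ∀ x y : ℝ, 0 < x → 0 < y → l (x * y) = l x + l y) {a b : ℝ} (ha : 0 < a)
    (hb : 0 < b) : l (a / b) = l a - l b := by
  have h := hlog (a / b) b (div_pos ha hb) hb
  rw [div_mul_cancel₀ a hb.ne'] at h
  linarith

theorem stmt_2 (l : ℝ → ℝ)
    (hlog : ∀ x y : ℝ, 0 < x → 0 < y → l (x * y) = l x + l y)
    (hsym : ∀ x ∈ Ioo (0:ℝ) 1, l x = l (1 - x)) :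
    ∀ x : ℝ, 0 < x → l x = 0 := by
  intro x hx
  have hx1 : 0 < 1 + x := by linarith
  have hmem : x / (1 + x) ∈ Ioo (0:ℝ) 1 :=
    ⟨div_pos hx hx1, (div_lt_one hx1).2 (by linarith)⟩
  have hcompl : 1 - x / (1 + x) = 1 / (1 + x) := by
    field_simp
    ring
  have h := hsym _ hmem
  rw [hcompl, map_div_of_map_mul_pos hlog hx hx1, map_div_of_map_mul_pos hlog one_pos hx1,
    map_one_of_map_mul_pos hlog] at h
  linarith
end

section
/- If A : (0,∞)² → ℝ (functions of two positive real variables) satisfies A(u, v+w) = A(v, u+w) for all u, v, w > 0, then there exists a function φ : (0,∞) → ℝ such that A(u, v) = φ(u+v) for all u, v > 0. -/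
/-! Splitting `b = x + (b - x)` in the equation gives `A a b = A x (a + b - x)` for `0 < x < b`, so
any two points on a line `u + v = s` are linked through a common first coordinate `x` smaller than
both second coordinates. -/

section

variable {A : ℝ → ℝ → ℝ}

theorem eq_apply_sub_of_lt (hA : ∀ u v w : ℝ, 0 < u → 0 < v → 0 < w → A u (v + w) = A v (u + w))
    {a b x : ℝ} (ha : 0 < a) (hx : 0 < x) (hxb : x < b) :
    A a b = A x (a + b - x) := by
  convert hA a x (b - x) ha hx (by linarith) using 2 <;> ring

theorem eq_of_add_eq (hA : ∀ u v w : ℝ, 0 < u → 0 < v → 0 < w → A u (v + w) = A v (u + w))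
    {u v u' v' : ℝ} (hu : 0 < u) (hv : 0 < v) (hu' : 0 < u') (hv' : 0 < v')
    (h : u + v = u' + v') : A u v = A u' v' := by
  have hx : 0 < min v v' / 2 := by positivity
  calc A u v = A (min v v' / 2) (u + v - min v v' / 2) :=
        eq_apply_sub_of_lt hA hu hx (by linarith [min_le_left v v'])
    _ = A (min v v' / 2) (u' + v' - min v v' / 2) := by rw [h]
    _ = A u' v' := (eq_apply_sub_of_lt hA hu' hx (by linarith [min_le_right v v'])).symm

end

theorem stmt_4 (A : ℝ → ℝ → ℝ)
    (hA : ∀ u v w : ℝ, 0 < u → 0 < v → 0 < w → A u (v + w) = A v (u + w)) :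
    ∃ φ : ℝ → ℝ, ∀ u v : ℝ, 0 < u → 0 < v → A u v = φ (u + v) :=
  ⟨fun s => A (s / 2) (s / 2), fun _ _ hu hv =>
    eq_of_add_eq hA hu hv (by positivity) (by positivity) (by ring)⟩
end

section
/- If A : (0,∞)² → ℝ is continuous and satisfies A(u, v+w) = A(v, u+w) for all u, v, w > 0, then there exists a continuous φ : (0,∞) → ℝ with A(u, v) = φ(u+v) for all u, v > 0. -/
/-! The functional equation lets one move along the line `u + v = s` in steps of the form
`(a, b) ↦ (c, a + b - c)` with `c < b`; two such steps reach the diagonal point `(s/2, s/2)`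
from any `(u, v)`, so `φ s := A (s/2) (s/2)` works, and it is continuous because `A` is. -/

open Set

lemma apply_eq_apply_of_add_eq {A : ℝ → ℝ → ℝ}
    (hA : ∀ u v w : ℝ, 0 < u → 0 < v → 0 < w → A u (v + w) = A v (u + w))
    {a b c d : ℝ} (ha : 0 < a) (hc : 0 < c) (hcb : c < b) (hsum : a + b = c + d) :
    A a b = A c d := by
  have h := hA a c (b - c) ha hc (sub_pos.mpr hcb)
  rwa [add_sub_cancel, show a + (b - c) = d by linarith] at h

lemma apply_eq_apply_half_add {A : ℝ → ℝ → ℝ}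
    (hA : ∀ u v w : ℝ, 0 < u → 0 < v → 0 < w → A u (v + w) = A v (u + w))
    {u v : ℝ} (hu : 0 < u) (hv : 0 < v) :
    A u v = A ((u + v) / 2) ((u + v) / 2) := by
  set c := min u v / 2 with hc_def
  have hc : 0 < c := by positivity
  have hcu : c < u := by linarith [min_le_left u v, hc_def]
  have hcv : c < v := by linarith [min_le_right u v, hc_def]
  calc A u v = A c (u + v - c) := apply_eq_apply_of_add_eq hA hu hc hcv (by ring)
    _ = A ((u + v) / 2) ((u + v) / 2) :=
      apply_eq_apply_of_add_eq hA hc (by positivity) (by linarith) (by ring)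

theorem stmt_5 (A : ℝ → ℝ → ℝ)
    (hcont : ContinuousOn (fun p : ℝ × ℝ => A p.1 p.2) (Ioi (0:ℝ) ×ˢ Ioi (0:ℝ)))
    (hA : ∀ u v w : ℝ, 0 < u → 0 < v → 0 < w → A u (v + w) = A v (u + w)) :
    ∃ φ : ℝ → ℝ, ContinuousOn φ (Ioi (0:ℝ)) ∧
      ∀ u v : ℝ, 0 < u → 0 < v → A u v = φ (u + v) := by
  refine ⟨fun s => A (s / 2) (s / 2), ?_, fun u v hu hv => apply_eq_apply_half_add hA hu hv⟩
  have hdiag : MapsTo (fun s : ℝ => (s / 2, s / 2)) (Ioi 0) (Ioi 0 ×ˢ Ioi 0) :=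
    fun s (hs : 0 < s) => ⟨half_pos hs, half_pos hs⟩
  exact hcont.comp (by fun_prop : Continuous fun s : ℝ => (s / 2, s / 2)).continuousOn hdiag
end

section
/- If A : ((0,∞)^k)² → ℝ satisfies A(u, v+w) = A(v, u+w) for all u, v, w in the positive cone of ℝ^k (with componentwise addition and ordering), then there exists φ : (0,∞)^k → ℝ such that A(u, v) = φ(u+v) for all u, v in the positive cone. -/
/-!
Split `v` into two halves: `A(u, v) = A(v/2, u + v/2)`. Writing `s = u + v`, the second argument
`u + v/2` equals `s/4 + (3u/4 + v/4)`, so a second swap gives `A(v/2, u + v/2) = A(s/4, 3s/4)`,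
which depends on `u + v` only.
-/

namespace ConvexCone

variable {𝕜 M β : Type*} [Field 𝕜] [LinearOrder 𝕜] [IsStrictOrderedRing 𝕜]
  [AddCommMonoid M] [Module 𝕜 M]

theorem apply_eq_apply_quarter_smul_add (C : ConvexCone 𝕜 M) {A : M → M → β}
    (hA : ∀ u ∈ C, ∀ v ∈ C, ∀ w ∈ C, A u (v + w) = A v (u + w))
    {u v : M} (hu : u ∈ C) (hv : v ∈ C) :
    A u v = A ((1 / 4 : 𝕜) • (u + v)) ((3 / 4 : 𝕜) • (u + v)) := by
  have hv₂ : (1 / 2 : 𝕜) • v ∈ C := C.smul_mem (by norm_num) hv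
  have hs₄ : (1 / 4 : 𝕜) • (u + v) ∈ C := C.smul_mem (by norm_num) (C.add_mem hu hv)
  have hw : (3 / 4 : 𝕜) • u + (1 / 4 : 𝕜) • v ∈ C :=
    C.add_mem (C.smul_mem (by norm_num) hu) (C.smul_mem (by norm_num) hv)
  calc A u v = A u ((1 / 2 : 𝕜) • v + (1 / 2 : 𝕜) • v) := by congr 1; module
    _ = A ((1 / 2 : 𝕜) • v) (u + (1 / 2 : 𝕜) • v) := hA _ hu _ hv₂ _ hv₂
    _ = A ((1 / 2 : 𝕜) • v) ((1 / 4 : 𝕜) • (u + v) + ((3 / 4 : 𝕜) • u + (1 / 4 : 𝕜) • v)) := by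
      congr 1; module
    _ = A ((1 / 4 : 𝕜) • (u + v)) ((1 / 2 : 𝕜) • v + ((3 / 4 : 𝕜) • u + (1 / 4 : 𝕜) • v)) :=
      hA _ hv₂ _ hs₄ _ hw
    _ = A ((1 / 4 : 𝕜) • (u + v)) ((3 / 4 : 𝕜) • (u + v)) := by congr 1; module

theorem exists_apply_eq_comp_add (C : ConvexCone 𝕜 M) {A : M → M → β}
    (hA : ∀ u ∈ C, ∀ v ∈ C, ∀ w ∈ C, A u (v + w) = A v (u + w)) :
    ∃ φ : M → β, ∀ u ∈ C, ∀ v ∈ C, A u v = φ (u + v) :=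
  ⟨fun s => A ((1 / 4 : 𝕜) • s) ((3 / 4 : 𝕜) • s),
    fun _ hu _ hv => C.apply_eq_apply_quarter_smul_add hA hu hv⟩

end ConvexCone

def ConvexCone.positiveOrthant (𝕜 ι : Type*) [Semiring 𝕜] [PartialOrder 𝕜]
    [IsStrictOrderedRing 𝕜] : ConvexCone 𝕜 (ι → 𝕜) where
  carrier := {x | ∀ i, 0 < x i}
  smul_mem' _ hc _ hx i := mul_pos hc (hx i)
  add_mem' _ hx _ hy i := add_pos (hx i) (hy i)

theorem stmt_6_general (k : ℕ) (A : (Fin k → ℝ) → (Fin k → ℝ) → ℝ)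
    (hA : ∀ u v w : Fin k → ℝ, (∀ i, 0 < u i) → (∀ i, 0 < v i) → (∀ i, 0 < w i) →
      A u (v + w) = A v (u + w)) :
    ∃ φ : (Fin k → ℝ) → ℝ, ∀ u v : Fin k → ℝ,
      (∀ i, 0 < u i) → (∀ i, 0 < v i) → A u v = φ (u + v) := by
  obtain ⟨φ, hφ⟩ := (ConvexCone.positiveOrthant ℝ (Fin k)).exists_apply_eq_comp_add
    fun u hu v hv w hw => hA u v w hu hv hw
  exact ⟨φ, fun u v hu hv => hφ u hu v hv⟩

theorem stmt_6 (k : ℕ) (hk : 0 < k) (A : (Fin k → ℝ) → (Fin k → ℝ) → ℝ)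
    (hA : ∀ u v w : Fin k → ℝ, (∀ i, 0 < u i) → (∀ i, 0 < v i) → (∀ i, 0 < w i) →
      A u (v + w) = A v (u + w)) :
    ∃ φ : (Fin k → ℝ) → ℝ, ∀ u v : Fin k → ℝ,
      (∀ i, 0 < u i) → (∀ i, 0 < v i) → A u v = φ (u + v) :=
  stmt_6_general k A hA
end

section
/- Let f : [0,∞)³ → ℝ be symmetric (invariant under all permutations of its three arguments) and satisfy the modified entropy equation f(x,y,z) = f(x, y+z, 0) + (y+z)·f(0, y/(y+z), z/(y+z)) for all x, y, z > 0. Then there exist a logarithmic function l : (0,∞) → ℝ and a function ψ : (0,∞) → ℝ such that f(x,y,z) = x·l(x) + y·l(y) + z·l(z) + ψ(x+y+z) for all x, y, z > 0. -/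
/-!
Write `f x y z = f x (y + z) 0 + B y z`. The symmetries of `f` make `B` a symmetric 2-cocycle on
`(0, ∞)` with `B (t * y) (t * z) = t * B y z`. Such a cocycle is `Λ y + Λ z - Λ (y + z)` for a `Λ`
with `Λ (a * b) = a * Λ b + b * Λ a`; then `l x = Λ x / x` is logarithmic, and
`f x y z - Λ x - Λ y - Λ z = f x (y + z) 0 - Λ x - Λ (y + z)` depends only on `x + y + z`.

To find `Λ`, first write `B` as the coboundary of some `φ`, which is possible because `ℝ` is an
injective `ℤ`-module. Homogeneity then makes `a ↦ (a, φ a)` multiplicative in a square-zero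
extension of `ℝ` by `ℝ`; as `ℝ` is formally smooth over `ℤ`, this extension has a ring section,
and the section corrects `φ` into `Λ`.
-/

open Function
open scoped NNReal

section Coboundary

variable {A E : Type*} [AddCommMonoid A] [AddCommGroup E]

structure IsSymmCocycle (c : A → A → E) : Prop where
  symm : ∀ a b, c a b = c b a
  zero_left : ∀ a, c 0 a = 0
  cocycle : ∀ a b d, c a b + c (a + b) d = c a (b + d) + c b d

@[ext]
structure CocycleExt {c : A → A → E} (hc : IsSymmCocycle c) where
  base : A
  fiber : E

namespace CocycleExt

variable {c : A → A → E} {hc : IsSymmCocycle c}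

instance : Add (CocycleExt hc) :=
  ⟨fun p q => ⟨p.base + q.base, p.fiber + q.fiber + c p.base q.base⟩⟩
instance : Zero (CocycleExt hc) := ⟨⟨0, 0⟩⟩

@[simp] theorem base_add (p q : CocycleExt hc) : (p + q).base = p.base + q.base := rfl
@[simp] theorem fiber_add (p q : CocycleExt hc) :
    (p + q).fiber = p.fiber + q.fiber + c p.base q.base := rfl
@[simp] theorem base_zero : (0 : CocycleExt hc).base = 0 := rfl
@[simp] theorem fiber_zero : (0 : CocycleExt hc).fiber = 0 := rfl

instance : AddCommMonoid (CocycleExt hc) where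
  add_assoc p q r := by
    ext
    · exact add_assoc _ _ _
    · simp only [fiber_add, base_add]
      calc _ = p.fiber + q.fiber + r.fiber + (c p.base q.base + c (p.base + q.base) r.base) := by
            abel
        _ = p.fiber + q.fiber + r.fiber + (c p.base (q.base + r.base) + c q.base r.base) := by
            rw [hc.cocycle]
        _ = _ := by abel
  zero_add p := by ext <;> simp [hc.zero_left]
  add_zero p := by ext <;> simp [hc.symm _ 0, hc.zero_left]
  add_comm p q := by ext <;> simp [add_comm, hc.symm p.base]
  nsmul := nsmulRec

variable (hc) in
def fiberHom : E →+ CocycleExt hc where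
  toFun e := ⟨0, e⟩
  map_zero' := rfl
  map_add' e e' := by ext <;> simp [hc.zero_left]

end CocycleExt

open Algebra in
theorem IsSymmCocycle.exists_eq_coboundary [DivisibleBy E ℤ] {c : A → A → E}
    (hc : IsSymmCocycle c) : ∃ φ : A → E, ∀ a b, c a b = φ a + φ b - φ (a + b) := by
  let ι := (GrothendieckAddGroup.of (M := CocycleExt hc)).comp (CocycleExt.fiberHom hc)
  have hι : Injective ι := by
    intro e e' h
    obtain ⟨⟨p, _⟩, hp⟩ := (AddLocalization.addMonoidOf ⊤).eq_iff_exists.mp h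
    simpa [CocycleExt.fiberHom] using congrArg CocycleExt.fiber hp
  obtain ⟨r, hr⟩ :=
    (Module.Baer.of_divisible E).extension_property_addMonoidHom ι hι (AddMonoidHom.id E)
  have hr' (e : E) : r (GrothendieckAddGroup.of (CocycleExt.fiberHom hc e)) = e :=
    DFunLike.congr_fun hr e
  refine ⟨fun a => r (GrothendieckAddGroup.of ⟨a, 0⟩), fun a b => ?_⟩
  have hsplit :
      (⟨a, 0⟩ + ⟨b, 0⟩ : CocycleExt hc) = ⟨a + b, 0⟩ + CocycleExt.fiberHom hc (c a b) := by
    ext <;> simp [CocycleExt.fiberHom, hc.symm _ 0, hc.zero_left]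
  have := congrArg (r ∘ GrothendieckAddGroup.of) hsplit
  simp only [comp_apply, map_add, hr'] at this
  rw [this]
  abel

end Coboundary

section SquareZero

variable {K : Type*} [CommRing K]

def IsHomogeneousAddDefect (φ : K → K) : Prop :=
  ∀ t a b, φ (t * a) + φ (t * b) - φ (t * a + t * b) = t * (φ a + φ b - φ (a + b))

theorem IsHomogeneousAddDefect.map_zero {φ : K → K} (hφ : IsHomogeneousAddDefect φ) : φ 0 = 0 := by
  simpa using hφ 0 0 0

/-- `K ⊕ Kε` with `ε² = 0` and the multiplication twisted so that `a ↦ ⟨a, φ a⟩` is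
multiplicative; distributivity is exactly the homogeneity of `φ a + φ b - φ (a + b)`. -/
@[ext]
structure TwistedDualNumber {φ : K → K} (hφ : IsHomogeneousAddDefect φ) where
  base : K
  fiber : K

namespace TwistedDualNumber

variable {φ : K → K} {hφ : IsHomogeneousAddDefect φ}

instance : Add (TwistedDualNumber hφ) := ⟨fun p q => ⟨p.base + q.base, p.fiber + q.fiber⟩⟩
instance : Zero (TwistedDualNumber hφ) := ⟨⟨0, 0⟩⟩
instance : Neg (TwistedDualNumber hφ) := ⟨fun p => ⟨-p.base, -p.fiber⟩⟩
instance : One (TwistedDualNumber hφ) := ⟨⟨1, φ 1⟩⟩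
instance : Mul (TwistedDualNumber hφ) := ⟨fun p q => ⟨p.base * q.base,
  p.base * q.fiber + q.base * p.fiber + φ (p.base * q.base) - p.base * φ q.base
    - q.base * φ p.base⟩⟩

@[simp] theorem base_add (p q : TwistedDualNumber hφ) : (p + q).base = p.base + q.base := rfl
@[simp] theorem fiber_add (p q : TwistedDualNumber hφ) : (p + q).fiber = p.fiber + q.fiber := rfl
@[simp] theorem base_zero : (0 : TwistedDualNumber hφ).base = 0 := rfl
@[simp] theorem fiber_zero : (0 : TwistedDualNumber hφ).fiber = 0 := rfl
@[simp] theorem base_neg (p : TwistedDualNumber hφ) : (-p).base = -p.base := rfl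
@[simp] theorem fiber_neg (p : TwistedDualNumber hφ) : (-p).fiber = -p.fiber := rfl
@[simp] theorem base_one : (1 : TwistedDualNumber hφ).base = 1 := rfl
@[simp] theorem fiber_one : (1 : TwistedDualNumber hφ).fiber = φ 1 := rfl
@[simp] theorem base_mul (p q : TwistedDualNumber hφ) : (p * q).base = p.base * q.base := rfl
@[simp] theorem fiber_mul (p q : TwistedDualNumber hφ) : (p * q).fiber = p.base * q.fiber +
    q.base * p.fiber + φ (p.base * q.base) - p.base * φ q.base - q.base * φ p.base := rfl

instance : CommRing (TwistedDualNumber hφ) where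
  add_assoc p q r := by ext <;> simp [add_assoc]
  zero_add p := by ext <;> simp
  add_zero p := by ext <;> simp
  add_comm p q := by ext <;> simp [add_comm]
  neg_add_cancel p := by ext <;> simp
  mul_assoc p q r := by ext <;> simp [mul_assoc]; ring
  one_mul p := by ext <;> simp
  mul_one p := by ext <;> simp; ring
  zero_mul p := by ext <;> simp [hφ.map_zero]
  mul_zero p := by ext <;> simp [hφ.map_zero]
  left_distrib p q r := by
    ext
    · simp [mul_add]
    · simp only [fiber_mul, fiber_add, base_add, mul_add]
      linear_combination -hφ p.base q.base r.base
  right_distrib p q r := by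
    ext
    · simp [add_mul]
    · simp only [fiber_mul, fiber_add, base_add, add_mul, mul_comm p.base r.base,
        mul_comm q.base r.base]
      linear_combination -hφ r.base p.base q.base
  mul_comm p q := by ext <;> simp [mul_comm]; ring
  nsmul := nsmulRec
  zsmul := zsmulRec

variable (hφ) in
def baseHom : TwistedDualNumber hφ →+* K where
  toFun := base
  map_one' := rfl
  map_mul' _ _ := rfl
  map_zero' := rfl
  map_add' _ _ := rfl

end TwistedDualNumber

/-- The fibre component `σ` of a ring section of `TwistedDualNumber hφ → K` is additive and
satisfies `σ (a * b) = a * σ b + b * σ a + φ (a * b) - a * φ b - b * φ a`, so `φ - σ` works. -/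
theorem exists_leibniz_of_isHomogeneousAddDefect [Algebra.FormallySmooth ℤ K] {φ : K → K}
    (hφ : IsHomogeneousAddDefect φ) :
    ∃ Λ : K → K, (∀ a b, Λ (a * b) = a * Λ b + b * Λ a) ∧
      ∀ a b, Λ a + Λ b - Λ (a + b) = φ a + φ b - φ (a + b) := by
  let π := (TwistedDualNumber.baseHom hφ).toIntAlgHom
  have hπ : Surjective π := fun a => ⟨⟨a, 0⟩, rfl⟩
  have hker : RingHom.ker (π : TwistedDualNumber hφ →+* K) ^ 2 = ⊥ := by
    rw [pow_two, eq_bot_iff, Ideal.mul_le]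
    intro p hp q hq
    rw [RingHom.mem_ker] at hp hq
    change p.base = 0 at hp
    change q.base = 0 at hq
    rw [Ideal.mem_bot]
    ext <;> simp [hp, hq, hφ.map_zero]
  let s := Algebra.FormallySmooth.liftOfSurjective (AlgHom.id ℤ K) π hπ ⟨2, hker⟩
  have hs (a : K) : (s a).base = a :=
    Algebra.FormallySmooth.liftOfSurjective_apply (AlgHom.id ℤ K) π hπ ⟨2, hker⟩ a
  refine ⟨fun a => φ a - (s a).fiber, fun a b => ?_, fun a b => ?_⟩
  · have := congrArg TwistedDualNumber.fiber (map_mul s a b)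
    simp only [TwistedDualNumber.fiber_mul, hs] at this
    dsimp only
    rw [this]; ring
  · have := congrArg TwistedDualNumber.fiber (map_add s a b)
    simp only [TwistedDualNumber.fiber_add] at this
    dsimp only
    rw [this]; ring

end SquareZero

instance Algebra.FormallySmooth.int_of_charZero (L : Type*) [Field L] [CharZero L] :
    Algebra.FormallySmooth ℤ L := by
  obtain ⟨s, hs⟩ := exists_isTranscendenceBasis ℚ L
  have := hs.isAlgebraic_field
  have : Algebra.FormallySmooth ℚ L := .of_algebraicIndependent_of_isSeparable hs.1
  have : Algebra.FormallySmooth ℤ ℚ := .of_isLocalization (nonZeroDivisors ℤ)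
  exact .comp ℤ ℚ L

theorem add_of_odd_of_add_pos {g : ℝ → ℝ} (hodd : ∀ x, g (-x) = -g x)
    (hadd : ∀ x y, 0 < x → 0 < y → g (x + y) = g x + g y) (x y : ℝ) :
    g (x + y) = g x + g y := by
  have hsub : ∀ p q, 0 < p → 0 < q → g (p - q) = g p - g q := by
    intro p q hp hq
    rcases lt_trichotomy p q with hpq | rfl | hpq
    · have := hadd (q - p) p (by linarith) hp
      rw [sub_add_cancel] at this
      rw [← neg_sub, hodd]; linarith
    · have := hodd 0
      rw [neg_zero] at this
      rw [sub_self, sub_self]; linarith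
    · have := hadd (p - q) q (by linarith) hq
      rw [sub_add_cancel] at this
      linarith
  have hrep (x : ℝ) : ∃ p q, 0 < p ∧ 0 < q ∧ x = p - q :=
    ⟨x + |x| + 1, |x| + 1, by linarith [neg_abs_le x], by positivity, by ring⟩
  obtain ⟨p, q, hp, hq, rfl⟩ := hrep x
  obtain ⟨p', q', hp', hq', rfl⟩ := hrep y
  rw [show p - q + (p' - q') = (p + p') - (q + q') by ring,
    hsub _ _ (by positivity) (by positivity),
    hsub p q hp hq, hsub p' q' hp' hq', hadd p p' hp hp', hadd q q' hq hq']
  ring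

theorem isHomogeneousAddDefect_of_odd {φ : ℝ → ℝ} (hodd : ∀ x, φ (-x) = -φ x)
    (hhom : ∀ t a b, 0 < t → 0 < a → 0 < b →
      φ (t * a) + φ (t * b) - φ (t * a + t * b) = t * (φ a + φ b - φ (a + b))) :
    IsHomogeneousAddDefect φ := by
  intro t a b
  have hpos : ∀ t, 0 < t → ∀ a b,
      φ (t * a) + φ (t * b) - φ (t * a + t * b) = t * (φ a + φ b - φ (a + b)) := by
    intro t ht
    have := add_of_odd_of_add_pos (g := fun x => φ (t * x) - t * φ x)
      (fun x => by simp only [mul_neg, hodd]; ring)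
      (fun x y hx hy => by
        have := hhom t x y ht hx hy
        rw [← mul_add] at this
        linear_combination -this)
    intro a b
    have := this a b
    simp only [mul_add] at this
    linear_combination -this
  rcases lt_trichotomy t 0 with ht | rfl | ht
  · have := hpos (-t) (by linarith) a b
    simp only [neg_mul, ← neg_add, hodd] at this
    linear_combination -this
  · have := hodd 0
    simp only [neg_zero, zero_mul, add_zero] at this ⊢
    linarith
  · exact hpos t ht a b

theorem exists_odd_potential_of_cocycle_pos {B : ℝ → ℝ → ℝ}
    (hsymm : ∀ a b, 0 < a → 0 < b → B a b = B b a)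
    (hcoc : ∀ a b c, 0 < a → 0 < b → 0 < c → B a b + B (a + b) c = B a (b + c) + B b c) :
    ∃ φ : ℝ → ℝ, (∀ x, φ (-x) = -φ x) ∧
      ∀ a b, 0 < a → 0 < b → B a b = φ a + φ b - φ (a + b) := by
  let c : ℝ≥0 → ℝ≥0 → ℝ := fun a b => if 0 < a ∧ 0 < b then B a b else 0
  have hc : IsSymmCocycle c :=
    { symm a b := by
        by_cases h : 0 < a ∧ 0 < b
        · simp [c, h, hsymm a b h.1 h.2]
        · simp [c, h, and_comm.not.mp h]
      zero_left a := by simp [c]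
      cocycle a b d := by
        rcases eq_zero_or_pos a with rfl | ha <;> rcases eq_zero_or_pos b with rfl | hb <;>
          rcases eq_zero_or_pos d with rfl | hd <;> simp [c, *] }
  obtain ⟨φ₀, hφ₀⟩ := hc.exists_eq_coboundary
  have hφ₀zero : φ₀ 0 = 0 := by simpa [c] using (hφ₀ 0 0).symm
  refine ⟨fun x => φ₀ x.toNNReal - φ₀ (-x).toNNReal, fun x => by simp, fun a b ha hb => ?_⟩
  have := hφ₀ a.toNNReal b.toNNReal
  simp only [c, Real.toNNReal_pos, ha, hb, and_self, if_true, Real.coe_toNNReal _ ha.le,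
    Real.coe_toNNReal _ hb.le] at this
  simp only [Real.toNNReal_of_nonpos (neg_nonpos.mpr ha.le),
    Real.toNNReal_of_nonpos (neg_nonpos.mpr hb.le),
    Real.toNNReal_of_nonpos (neg_nonpos.mpr (add_pos ha hb).le), hφ₀zero, sub_zero,
    Real.toNNReal_add ha.le hb.le, this]

theorem exists_leibniz_of_cocycle_pos {B : ℝ → ℝ → ℝ}
    (hsymm : ∀ a b, 0 < a → 0 < b → B a b = B b a)
    (hcoc : ∀ a b c, 0 < a → 0 < b → 0 < c → B a b + B (a + b) c = B a (b + c) + B b c)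
    (hhom : ∀ t a b, 0 < t → 0 < a → 0 < b → B (t * a) (t * b) = t * B a b) :
    ∃ Λ : ℝ → ℝ, (∀ a b, Λ (a * b) = a * Λ b + b * Λ a) ∧
      ∀ a b, 0 < a → 0 < b → B a b = Λ a + Λ b - Λ (a + b) := by
  obtain ⟨φ, hodd, hφ⟩ := exists_odd_potential_of_cocycle_pos hsymm hcoc
  obtain ⟨Λ, hΛmul, hΛ⟩ := exists_leibniz_of_isHomogeneousAddDefect <|
    isHomogeneousAddDefect_of_odd hodd fun t a b ht ha hb => by
      rw [← hφ _ _ (by positivity) (by positivity), ← hφ a b ha hb, hhom t a b ht ha hb]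
  exact ⟨Λ, hΛmul, fun a b ha hb => by rw [hΛ, hφ a b ha hb]⟩

noncomputable def branchTerm (f : ℝ → ℝ → ℝ → ℝ) (y z : ℝ) : ℝ :=
  (y + z) * f 0 (y / (y + z)) (z / (y + z))

theorem branchTerm_mul (f : ℝ → ℝ → ℝ → ℝ) (t y z : ℝ) :
    branchTerm f (t * y) (t * z) = t * branchTerm f y z := by
  rcases eq_or_ne t 0 with rfl | ht
  · simp [branchTerm]
  · simp only [branchTerm, ← mul_add, mul_div_mul_left _ _ ht]
    ring

section Entropy

variable {f : ℝ → ℝ → ℝ → ℝ}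

theorem branchTerm_comm (hsym2 : ∀ x y z : ℝ, f x y z = f x z y) (y z : ℝ) :
    branchTerm f y z = branchTerm f z y := by
  rw [branchTerm, branchTerm, hsym2, add_comm z]

variable (hsym1 : ∀ x y z : ℝ, f x y z = f y x z)
  (heq : ∀ x y z : ℝ, 0 < x → 0 < y → 0 < z →
    f x y z = f x (y + z) 0 + (y + z) * f 0 (y / (y + z)) (z / (y + z)))
include hsym1 heq

theorem sub_eq_branchTerm_sub {u v w : ℝ} (hu : 0 < u) (hv : 0 < v) (hw : 0 < w) :
    f u (v + w) 0 - f v (u + w) 0 = branchTerm f u w - branchTerm f v w := by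
  have := heq v u w hv hu hw
  rw [← hsym1, heq u v w hu hv hw] at this
  rw [branchTerm, branchTerm]
  linarith

theorem branchTerm_cocycle (hsym2 : ∀ x y z : ℝ, f x y z = f x z y) {x y z : ℝ}
    (hx : 0 < x) (hy : 0 < y) (hz : 0 < z) :
    branchTerm f x y + branchTerm f (x + y) z = branchTerm f x (y + z) + branchTerm f y z := by
  have h₁ := sub_eq_branchTerm_sub hsym1 heq hy (by positivity : 0 < y + z) hx
  have h₂ := sub_eq_branchTerm_sub hsym1 heq (by positivity : 0 < x + y) hy hz
  rw [hsym1 (y + z), add_comm y x, show y + z + x = x + y + z by ring, branchTerm_comm hsym2 y,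
    branchTerm_comm hsym2 (y + z)] at h₁
  linarith

end Entropy

theorem apply_eq_apply_half_of_swap {G : ℝ → ℝ → ℝ}
    (h : ∀ x y z, 0 < x → 0 < y → 0 < z → G x (y + z) = G y (x + z)) {x s : ℝ}
    (hx : 0 < x) (hs : 0 < s) : G x s = G ((x + s) / 2) ((x + s) / 2) := by
  obtain ⟨ε, hε, hεx, hεs⟩ : ∃ ε, 0 < ε ∧ ε < x ∧ ε < s :=
    ⟨min x s / 2, by positivity, by linarith [min_le_left x s, lt_min hx hs],
      by linarith [min_le_right x s, lt_min hx hs]⟩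
  have h₁ := h x ε (s - ε) hx hε (by linarith)
  have h₂ := h ((x + s) / 2) ε ((x + s) / 2 - ε) (by positivity) hε (by linarith)
  rw [add_sub_cancel] at h₁ h₂
  rw [h₁, h₂]
  congr 1
  ring

theorem stmt_11 (f : ℝ → ℝ → ℝ → ℝ)
    (hsym1 : ∀ x y z : ℝ, f x y z = f y x z)
    (hsym2 : ∀ x y z : ℝ, f x y z = f x z y)
    (heq : ∀ x y z : ℝ, 0 < x → 0 < y → 0 < z →
      f x y z = f x (y + z) 0 + (y + z) * f 0 (y / (y + z)) (z / (y + z))) :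
    ∃ l ψ : ℝ → ℝ,
      (∀ a b : ℝ, 0 < a → 0 < b → l (a * b) = l a + l b) ∧
      (∀ x y z : ℝ, 0 < x → 0 < y → 0 < z →
        f x y z = x * l x + y * l y + z * l z + ψ (x + y + z)) := by
  obtain ⟨Λ, hΛmul, hΛ⟩ := exists_leibniz_of_cocycle_pos (fun y z _ _ => branchTerm_comm hsym2 y z)
    (fun _ _ _ => branchTerm_cocycle hsym1 heq hsym2) (fun t y z _ _ _ => branchTerm_mul f t y z)
  set G : ℝ → ℝ → ℝ := fun x s => f x s 0 - Λ x - Λ s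
  have hf : ∀ x y z, 0 < x → 0 < y → 0 < z → f x y z = G x (y + z) + Λ x + Λ y + Λ z := by
    intro x y z hx hy hz
    rw [heq x y z hx hy hz, ← branchTerm, hΛ y z hy hz]
    ring
  have hswap : ∀ x y z, 0 < x → 0 < y → 0 < z → G x (y + z) = G y (x + z) := by
    intro x y z hx hy hz
    have := hf x y z hx hy hz
    rw [hsym1, hf y x z hy hx hz] at this
    linarith
  refine ⟨fun x => Λ x / x, fun T => G (T / 2) (T / 2), fun a b ha hb => ?_,
    fun x y z hx hy hz => ?_⟩
  · show Λ (a * b) / (a * b) = Λ a / a + Λ b / b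
    rw [hΛmul]
    field_simp
    ring
  · rw [hf x y z hx hy hz, apply_eq_apply_half_of_swap hswap hx (by positivity : 0 < y + z),
      mul_div_cancel₀ _ hx.ne', mul_div_cancel₀ _ hy.ne', mul_div_cancel₀ _ hz.ne', add_assoc x]
    ring
end

section
/- Let μ ≡ 1 and let f : [0,∞)³ → ℝ be symmetric satisfying f(x,y,z) = f(x, y+z, 0) + f(0, y/(y+z), z/(y+z)) for all x, y, z > 0. Then there exists ψ : (0,∞) → ℝ such that f(x,y,z) = ψ(x+y+z) for all x, y, z > 0. -/
/-!
Put `g t = f(0, t, 1 - t)`. The equation splits `f(x, y, z)` as `f(0, x, y + z) + g(y / (y + z))`;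
comparing the two splittings of `f(x, y, 1 - x - y) = f(y, x, 1 - x - y)` shows that `g` solves the
fundamental equation of information without its weights, and `g` is symmetric under `t ↦ 1 - t`.
Such a `g` is constant on `(0, 1)`: the equation at well-chosen points gives `g(p²) = g(p)` and
`2 g(x) = g(2x) + g(1/2)`, and the two are compatible only if `g(x) = g(1/2)`. Then
`f(0, x, y + z) = f(0, y, x + z)`, so `f(0, a, b)` depends only on `a + b`.
-/

/-- The fundamental equation of information with the weights `1 - x`, `1 - y` dropped, which is
the form it takes for `μ ≡ 1`. -/
def InformationEquation (h : ℝ → ℝ) : Prop :=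
  ∀ x y : ℝ, 0 < x → 0 < y → x + y < 1 → h x + h (y / (1 - x)) = h y + h (x / (1 - y))

namespace InformationEquation

variable {h : ℝ → ℝ} (hsymm : ∀ t, 0 < t → t < 1 → h (1 - t) = h t)
  (hfei : InformationEquation h)
include hsymm hfei

theorem apply_sq {p : ℝ} (hp : 0 < p) (hp1 : p < 1) : h (p ^ 2) = h p := by
  have hq : 0 < p / (1 + p) := by positivity
  have hq1 : p / (1 + p) < 1 := by rw [div_lt_one (by linarith)]; linarith
  have hsum : p / (1 + p) + (1 - p) < 1 := by
    have : p / (1 + p) < p := by rw [div_lt_iff₀ (by linarith)]; nlinarith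
    linarith
  have key := hfei (p / (1 + p)) (1 - p) hq (by linarith) hsum
  have h1p : 1 + p ≠ 0 := by positivity
  have e1 : (1 - p) / (1 - p / (1 + p)) = 1 - p ^ 2 := by field_simp; ring
  have e2 : p / (1 + p) / (1 - (1 - p)) = 1 - p / (1 + p) := by
    rw [sub_sub_cancel]; field_simp; ring
  rw [e1, e2, hsymm _ (by positivity) (by nlinarith), hsymm p hp hp1, hsymm _ hq hq1] at key
  linarith

theorem apply_div_one_add {p : ℝ} (hp : 0 < p) (hp1 : p < 1) : h (p / (1 + p)) = h p := by
  have key := hfei (p ^ 2) (1 - p) (by positivity) (by linarith) (by nlinarith)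
  have e1 : (1 - p) / (1 - p ^ 2) = 1 - p / (1 + p) := by
    have : 1 - p ^ 2 ≠ 0 := by nlinarith
    field_simp; ring
  have e2 : p ^ 2 / (1 - (1 - p)) = p := by rw [sub_sub_cancel]; field_simp
  have hq1 : p / (1 + p) < 1 := by rw [div_lt_one (by linarith)]; linarith
  rw [e1, e2, hsymm _ (by positivity) hq1, hsymm p hp hp1, apply_sq hsymm hfei hp hp1] at key
  linarith

theorem two_mul_apply {x : ℝ} (hx : 0 < x) (hx2 : x < 1 / 2) :
    2 * h x = h (2 * x) + h (1 / 2) := by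
  have key := hfei x (1 - 2 * x) hx (by linarith) (by linarith)
  have hp : 0 < x / (1 - x) := div_pos hx (by linarith)
  have hp1 : x / (1 - x) < 1 := by rw [div_lt_one (by linarith)]; linarith
  have e1 : (1 - 2 * x) / (1 - x) = 1 - x / (1 - x) := by
    have : 1 - x ≠ 0 := by linarith
    field_simp; ring
  have e2 : x / (1 - (1 - 2 * x)) = 1 / 2 := by field_simp; ring
  have e3 : x / (1 - x) / (1 + x / (1 - x)) = x := by
    have : 1 - x ≠ 0 := by linarith
    field_simp; ring
  have hinv := apply_div_one_add hsymm hfei hp hp1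
  rw [e3] at hinv
  rw [e1, e2, hsymm _ hp hp1, hsymm _ (by linarith) (by linarith), ← hinv] at key
  linarith

theorem apply_eq_half {x : ℝ} (hx : 0 < x) (hx1 : x < 1) : h x = h (1 / 2) := by
  -- Expand `4 h(x) = 4 h(x²)` by doubling twice and compare with `2 h(2x) = 2 h(4x²)`.
  have small : ∀ x, 0 < x → x < 1 / 2 → h x = h (1 / 2) := by
    intro x hx hx2
    have d1 := two_mul_apply hsymm hfei hx hx2
    have d2 := two_mul_apply hsymm hfei (x := x ^ 2) (by positivity) (by nlinarith)
    have d3 := two_mul_apply hsymm hfei (x := 2 * x ^ 2) (by positivity) (by nlinarith)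
    have s1 := apply_sq hsymm hfei hx (by linarith)
    have s2 := apply_sq hsymm hfei (p := 2 * x) (by linarith) (by linarith)
    rw [show (2 * x) ^ 2 = 2 * (2 * x ^ 2) by ring] at s2
    linarith
  rcases lt_trichotomy x (1 / 2) with hlt | rfl | hgt
  · exact small x hx hlt
  · rfl
  · rw [← hsymm x hx hx1]
    exact small (1 - x) (by linarith) (by linarith)

end InformationEquation

theorem eq_of_apply_add_comm {φ : ℝ → ℝ → ℝ}
    (hφ : ∀ x y z : ℝ, 0 < x → 0 < y → 0 < z → φ x (y + z) = φ y (x + z))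
    {a b : ℝ} (ha : 0 < a) (hb : 0 < b) : φ a b = φ ((a + b) / 2) ((a + b) / 2) :=
  calc φ a b = φ (b / 2) (a + b / 2) := by
        simpa [add_halves, add_comm] using hφ a (b / 2) (b / 2) ha (by positivity) (by positivity)
    _ = φ ((a + b) / 2) ((a + b) / 2) := by
        have := hφ (b / 2) ((a + b) / 2) (a / 2) (by positivity) (by positivity) (by positivity)
        convert this using 2 <;> ring

def binary (f : ℝ → ℝ → ℝ → ℝ) (t : ℝ) : ℝ := f 0 t (1 - t)

section

variable {f : ℝ → ℝ → ℝ → ℝ}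
  (hsym1 : ∀ x y z : ℝ, f x y z = f y x z)
  (hsym2 : ∀ x y z : ℝ, f x y z = f x z y)
  (heq : ∀ x y z : ℝ, 0 < x → 0 < y → 0 < z →
    f x y z = f x (y + z) 0 + f 0 (y / (y + z)) (z / (y + z)))

include hsym2 in
theorem binary_one_sub (t : ℝ) : binary f (1 - t) = binary f t := by
  rw [binary, binary, sub_sub_cancel, hsym2]

include hsym1 hsym2 heq in
theorem apply_eq_add_binary {x y z : ℝ} (hx : 0 < x) (hy : 0 < y) (hz : 0 < z) :
    f x y z = f 0 x (y + z) + binary f (y / (y + z)) := by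
  have hz' : z / (y + z) = 1 - y / (y + z) := by field_simp; ring
  rw [heq x y z hx hy hz, hsym2 x, hsym1 x, hz', binary]

include hsym1 hsym2 heq in
theorem informationEquation_binary : InformationEquation (binary f) := by
  intro x y hx hy hxy
  have hz : 0 < 1 - x - y := by linarith
  have e1 := apply_eq_add_binary hsym1 hsym2 heq hx hy hz
  have e2 := apply_eq_add_binary hsym1 hsym2 heq hy hx hz
  rw [show y + (1 - x - y) = 1 - x by ring] at e1
  rw [show x + (1 - x - y) = 1 - y by ring, ← hsym1] at e2
  rw [show f 0 x (1 - x) = binary f x from rfl] at e1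
  rw [show f 0 y (1 - y) = binary f y from rfl] at e2
  linarith

end

theorem stmt_12 (f : ℝ → ℝ → ℝ → ℝ)
    (hsym1 : ∀ x y z : ℝ, f x y z = f y x z)
    (hsym2 : ∀ x y z : ℝ, f x y z = f x z y)
    (heq : ∀ x y z : ℝ, 0 < x → 0 < y → 0 < z →
      f x y z = f x (y + z) 0 + f 0 (y / (y + z)) (z / (y + z))) :
    ∃ ψ : ℝ → ℝ, ∀ x y z : ℝ, 0 < x → 0 < y → 0 < z →
      f x y z = ψ (x + y + z) := by
  have hconst : ∀ {y z : ℝ}, 0 < y → 0 < z → binary f (y / (y + z)) = binary f (1 / 2) :=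
    fun hy hz => (informationEquation_binary hsym1 hsym2 heq).apply_eq_half
      (fun t _ _ => binary_one_sub hsym2 t) (by positivity)
      ((div_lt_one (by positivity)).2 (by linarith))
  have hsplit : ∀ {x y z : ℝ}, 0 < x → 0 < y → 0 < z →
      f x y z = f 0 x (y + z) + binary f (1 / 2) := fun hx hy hz => by
    rw [apply_eq_add_binary hsym1 hsym2 heq hx hy hz, hconst hy hz]
  have hswap : ∀ x y z : ℝ, 0 < x → 0 < y → 0 < z → f 0 x (y + z) = f 0 y (x + z) :=
    fun x y z hx hy hz => by
      have := hsplit hx hy hz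
      rw [hsym1, hsplit hy hx hz] at this
      linarith
  refine ⟨fun s => f 0 (s / 2) (s / 2) + binary f (1 / 2), fun x y z hx hy hz => ?_⟩
  rw [hsplit hx hy hz, eq_of_apply_add_comm hswap hx (by positivity), ← add_assoc]
end

section
/- Let μ : (0,∞) → ℝ be multiplicative but neither identically 1 nor additive (i.e., not a projection), and let f : [0,∞)³ → ℝ be symmetric satisfying f(x,y,z) = f(x, y+z, 0) + μ(y+z)·f(0, y/(y+z), z/(y+z)) for all x, y, z > 0. Then there exist a constant b ∈ ℝ and a function ψ : (0,∞) → ℝ such that f(x,y,z) = b(μ(x) + μ(y) + μ(z)) + ψ(x+y+z) for all x, y, z > 0. -/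
/-!
Put `H t = f(0, t, 1 - t)`. Expanding `f(x, y, z)` by the equation in two ways, with `y` or with `z`
as the middle argument, yields the parametric fundamental equation of information
`H x + μ(1 - x) H(p / (1 - x)) = H p + μ(1 - p) H(x / (1 - p))`. Three instances of it, at
`(1 - a, a c)`, `(1 - c, a c)` and at the point whose quotients are `c` and `a`, combine to
`H a (1 - μ c - μ(1 - c)) = H c (1 - μ a - μ(1 - a))`. Since `μ` is not additive, `μ t + μ(1 - t) ≠ 1`
for some `t`, so `H t = b (μ t + μ(1 - t) - 1)` for a constant `b`. Substituting back,
`f(x, u, 0) - b μ x - b μ u` depends only on `x + u`, which gives `ψ`.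
-/

def MultiplicativeOnPos (μ : ℝ → ℝ) : Prop :=
  ∀ x y : ℝ, 0 < x → 0 < y → μ (x * y) = μ x * μ y

def AdditiveOnPos (μ : ℝ → ℝ) : Prop :=
  ∀ x y : ℝ, 0 < x → 0 < y → μ (x + y) = μ x + μ y

namespace MultiplicativeOnPos

variable {μ : ℝ → ℝ}

theorem mul_map_div (hμ : MultiplicativeOnPos μ) {c d : ℝ} (hc : 0 < c) (hd : 0 < d) :
    μ c * μ (d / c) = μ d := by
  rw [← hμ c (d / c) hc (div_pos hd hc), mul_div_cancel₀ d hc.ne']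

theorem map_ne_zero (hμ : MultiplicativeOnPos μ) (hadd : ¬ AdditiveOnPos μ) {x : ℝ}
    (hx : 0 < x) : μ x ≠ 0 := by
  intro h0
  have hzero : ∀ c : ℝ, 0 < c → μ c = 0 := fun c hc => by
    rw [← hμ.mul_map_div hx hc, h0, zero_mul]
  exact hadd fun a c ha hc => by
    rw [hzero a ha, hzero c hc, hzero (a + c) (add_pos ha hc), add_zero]

theorem map_one (hμ : MultiplicativeOnPos μ) (hadd : ¬ AdditiveOnPos μ) : μ 1 = 1 := by
  have h := hμ 1 1 one_pos one_pos
  rw [mul_one] at h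
  exact (mul_left_cancel₀ (hμ.map_ne_zero hadd one_pos) (by rw [← h, mul_one])).symm

theorem exists_add_map_one_sub_ne_one (hμ : MultiplicativeOnPos μ) (hadd : ¬ AdditiveOnPos μ) :
    ∃ t : ℝ, 0 < t ∧ t < 1 ∧ μ t + μ (1 - t) ≠ 1 := by
  by_contra! hcon
  refine hadd fun a c ha hc => ?_
  have hs : 0 < a + c := add_pos ha hc
  have h := hcon (a / (a + c)) (div_pos ha hs) ((div_lt_one hs).2 (by linarith))
  rw [show (1 : ℝ) - a / (a + c) = c / (a + c) by field_simp; ring] at h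
  calc μ (a + c) = μ (a + c) * (μ (a / (a + c)) + μ (c / (a + c))) := by rw [h, mul_one]
    _ = μ a + μ c := by rw [mul_add, hμ.mul_map_div hs ha, hμ.mul_map_div hs hc]

end MultiplicativeOnPos

structure IsSymmetricEntropySolution (μ : ℝ → ℝ) (f : ℝ → ℝ → ℝ → ℝ) : Prop where
  swap₁₂ : ∀ x y z : ℝ, f x y z = f y x z
  swap₂₃ : ∀ x y z : ℝ, f x y z = f x z y
  entropy_eq : ∀ x y z : ℝ, 0 < x → 0 < y → 0 < z →
    f x y z = f x (y + z) 0 + μ (y + z) * f 0 (y / (y + z)) (z / (y + z))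

namespace IsSymmetricEntropySolution

variable {μ : ℝ → ℝ} {f : ℝ → ℝ → ℝ → ℝ}

theorem swap₁₃ (hf : IsSymmetricEntropySolution μ f) (x y z : ℝ) : f x y z = f z y x := by
  rw [hf.swap₁₂, hf.swap₂₃, hf.swap₁₂]

theorem binary_one_sub (hf : IsSymmetricEntropySolution μ f) (t : ℝ) :
    f 0 (1 - t) (1 - (1 - t)) = f 0 t (1 - t) := by
  rw [sub_sub_cancel, hf.swap₂₃]

theorem entropy_eq_one_sub (hf : IsSymmetricEntropySolution μ f) {x y z : ℝ}
    (hx : 0 < x) (hy : 0 < y) (hz : 0 < z) :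
    f x y z = f x (y + z) 0 + μ (y + z) * f 0 (y / (y + z)) (1 - y / (y + z)) := by
  have hyz : y + z ≠ 0 := by positivity
  rw [hf.entropy_eq x y z hx hy hz, show z / (y + z) = 1 - y / (y + z) by field_simp; ring]

/-- Both sides are expansions of `f (v - y) y (u - y)`. -/
theorem expand_eq_expand (hf : IsSymmetricEntropySolution μ f) {y u v : ℝ}
    (hy : 0 < y) (hu : y < u) (hv : y < v) :
    f (v - y) u 0 + μ u * f 0 (y / u) (1 - y / u)
      = f (u - y) v 0 + μ v * f 0 (y / v) (1 - y / v) := by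
  have e₁ := hf.entropy_eq_one_sub (sub_pos.2 hv) hy (sub_pos.2 hu)
  have e₂ := hf.entropy_eq_one_sub (sub_pos.2 hu) hy (sub_pos.2 hv)
  rw [add_sub_cancel] at e₁ e₂
  rw [← e₁, ← e₂, hf.swap₁₃]

theorem fundamental_equation (hf : IsSymmetricEntropySolution μ f) (h₁ : μ 1 = 1) {x p : ℝ}
    (hx : 0 < x) (hp : 0 < p) (hxp : x + p < 1) :
    f 0 x (1 - x) + μ (1 - x) * f 0 (p / (1 - x)) (1 - p / (1 - x))
      = f 0 p (1 - p) + μ (1 - p) * f 0 (x / (1 - p)) (1 - x / (1 - p)) := by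
  have hA := hf.expand_eq_expand hp (by linarith : p < 1 - x) (by linarith : p < 1)
  have hB := hf.expand_eq_expand hx (by linarith : x < 1 - p) (by linarith : x < 1)
  simp only [div_one, h₁, one_mul] at hA hB
  rw [sub_right_comm] at hB
  linarith [hf.swap₁₂ (1 - p) (1 - x) 0]

/-- The fundamental equation at the point `(a (1 - c), c (1 - a)) / (1 - a c)`, scaled by
`μ (1 - a c)`. -/
theorem fundamental_equation_rescaled (hf : IsSymmetricEntropySolution μ f)
    (hμ : MultiplicativeOnPos μ) (h₁ : μ 1 = 1) {a c : ℝ}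
    (ha : 0 < a) (ha₁ : a < 1) (hc : 0 < c) (hc₁ : c < 1) :
    μ (1 - a * c) * f 0 ((1 - a) / (1 - a * c)) (1 - (1 - a) / (1 - a * c))
        + μ (1 - a) * f 0 c (1 - c)
      = μ (1 - a * c) * f 0 ((1 - c) / (1 - a * c)) (1 - (1 - c) / (1 - a * c))
        + μ (1 - c) * f 0 a (1 - a) := by
  have hD : 0 < 1 - a * c := by nlinarith
  have hXY : a * (1 - c) / (1 - a * c) + c * (1 - a) / (1 - a * c) < 1 := by
    rw [← add_div, div_lt_one hD]
    nlinarith [mul_pos (sub_pos.2 ha₁) (sub_pos.2 hc₁)]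
  have h := hf.fundamental_equation h₁ (by positivity) (by positivity) hXY
  have hx : 1 - a * (1 - c) / (1 - a * c) = (1 - a) / (1 - a * c) := by
    field_simp; ring
  have hp : 1 - c * (1 - a) / (1 - a * c) = (1 - c) / (1 - a * c) := by
    rw [eq_div_iff hD.ne', sub_mul, div_mul_cancel₀ _ hD.ne']; ring
  rw [← hf.binary_one_sub (a * (1 - c) / (1 - a * c)),
    ← hf.binary_one_sub (c * (1 - a) / (1 - a * c)), hx, hp,
    show c * (1 - a) / (1 - a * c) / ((1 - a) / (1 - a * c)) = c by
      rw [div_div_div_cancel_right₀ hD.ne', mul_div_cancel_right₀ c (sub_pos.2 ha₁).ne'],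
    show a * (1 - c) / (1 - a * c) / ((1 - c) / (1 - a * c)) = a by
      rw [div_div_div_cancel_right₀ hD.ne', mul_div_cancel_right₀ a (sub_pos.2 hc₁).ne']] at h
  rw [← hμ.mul_map_div hD (sub_pos.2 ha₁), ← hμ.mul_map_div hD (sub_pos.2 hc₁)]
  linear_combination μ (1 - a * c) * h

theorem binary_mul_comm (hf : IsSymmetricEntropySolution μ f) (hμ : MultiplicativeOnPos μ)
    (h₁ : μ 1 = 1) {a c : ℝ} (ha : 0 < a) (ha₁ : a < 1) (hc : 0 < c) (hc₁ : c < 1) :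
    f 0 a (1 - a) * (1 - μ c - μ (1 - c)) = f 0 c (1 - c) * (1 - μ a - μ (1 - a)) := by
  have hF₁ := hf.fundamental_equation h₁ (sub_pos.2 ha₁) (mul_pos ha hc) (by nlinarith)
  have hF₂ := hf.fundamental_equation h₁ (sub_pos.2 hc₁) (mul_pos ha hc) (by nlinarith)
  rw [hf.binary_one_sub, sub_sub_cancel, mul_div_cancel_left₀ c ha.ne'] at hF₁
  rw [hf.binary_one_sub, sub_sub_cancel, mul_div_cancel_right₀ a hc.ne'] at hF₂
  linear_combination hF₁ - hF₂ + hf.fundamental_equation_rescaled hμ h₁ ha ha₁ hc hc₁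

theorem exists_binary_eq (hf : IsSymmetricEntropySolution μ f) (hμ : MultiplicativeOnPos μ)
    (hadd : ¬ AdditiveOnPos μ) :
    ∃ b : ℝ, ∀ t : ℝ, 0 < t → t < 1 → f 0 t (1 - t) = b * (μ t + μ (1 - t) - 1) := by
  obtain ⟨t₀, ht₀, ht₀₁, hne⟩ := hμ.exists_add_map_one_sub_ne_one hadd
  have hδ : μ t₀ + μ (1 - t₀) - 1 ≠ 0 := sub_ne_zero.2 hne
  refine ⟨f 0 t₀ (1 - t₀) / (μ t₀ + μ (1 - t₀) - 1), fun t ht ht₁ => ?_⟩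
  rw [div_mul_eq_mul_div, eq_div_iff hδ]
  linear_combination -hf.binary_mul_comm hμ (hμ.map_one hadd) ht ht₁ ht₀ ht₀₁

end IsSymmetricEntropySolution

section BinaryForm

variable {μ : ℝ → ℝ} {f : ℝ → ℝ → ℝ → ℝ} {b : ℝ}

theorem mul_binary_eq (hμ : MultiplicativeOnPos μ)
    (hb : ∀ t : ℝ, 0 < t → t < 1 → f 0 t (1 - t) = b * (μ t + μ (1 - t) - 1))
    {y u : ℝ} (hy : 0 < y) (hu : y < u) :
    μ u * f 0 (y / u) (1 - y / u) = b * (μ y + μ (u - y) - μ u) := by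
  have hu₀ : 0 < u := hy.trans hu
  rw [hb _ (div_pos hy hu₀) ((div_lt_one hu₀).2 hu),
    show (1 : ℝ) - y / u = (u - y) / u by field_simp]
  linear_combination b * hμ.mul_map_div hu₀ hy + b * hμ.mul_map_div hu₀ (sub_pos.2 hu)

theorem boundary_sub_eq (hf : IsSymmetricEntropySolution μ f) (hμ : MultiplicativeOnPos μ)
    (hb : ∀ t : ℝ, 0 < t → t < 1 → f 0 t (1 - t) = b * (μ t + μ (1 - t) - 1))
    {s u v : ℝ} (hus : u < s) (hvs : v < s) (hsuv : s < u + v) :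
    f (s - u) u 0 - b * μ (s - u) - b * μ u = f (s - v) v 0 - b * μ (s - v) - b * μ v := by
  have hy : 0 < u + v - s := by linarith
  have h := hf.expand_eq_expand hy (by linarith : u + v - s < u) (by linarith : u + v - s < v)
  rw [mul_binary_eq hμ hb hy (by linarith), mul_binary_eq hμ hb hy (by linarith),
    show v - (u + v - s) = s - u by ring, show u - (u + v - s) = s - v by ring] at h
  linear_combination h

theorem boundary_sub_eq_midpoint (hf : IsSymmetricEntropySolution μ f)
    (hμ : MultiplicativeOnPos μ)
    (hb : ∀ t : ℝ, 0 < t → t < 1 → f 0 t (1 - t) = b * (μ t + μ (1 - t) - 1))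
    {x u : ℝ} (hx : 0 < x) (hu : 0 < u) :
    f x u 0 - b * μ x - b * μ u
      = f ((x + u) / 2) ((x + u) / 2) 0 - 2 * b * μ ((x + u) / 2) := by
  have hmid : x + u - (x + u) / 2 = (x + u) / 2 := by ring
  rcases lt_trichotomy x u with hxu | rfl | hxu
  · have h := boundary_sub_eq hf hμ hb (s := x + u) (by linarith : u < x + u)
      (by linarith : (x + u) / 2 < x + u) (by linarith)
    rw [add_sub_cancel_right, hmid] at h
    linear_combination h
  · rw [← two_mul, mul_div_cancel_left₀ x two_ne_zero]
    ring
  · have h := boundary_sub_eq hf hμ hb (s := x + u) (by linarith : x < x + u)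
      (by linarith : (x + u) / 2 < x + u) (by linarith)
    rw [add_sub_cancel_left, hmid, hf.swap₁₂ u] at h
    linear_combination h

end BinaryForm

theorem stmt_13_general (μ : ℝ → ℝ) (f : ℝ → ℝ → ℝ → ℝ)
    (hmul : ∀ x y : ℝ, 0 < x → 0 < y → μ (x * y) = μ x * μ y)
    (hnotadd : ¬ (∀ x y : ℝ, 0 < x → 0 < y → μ (x + y) = μ x + μ y))
    (hsym1 : ∀ x y z : ℝ, f x y z = f y x z)
    (hsym2 : ∀ x y z : ℝ, f x y z = f x z y)
    (heq : ∀ x y z : ℝ, 0 < x → 0 < y → 0 < z →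
      f x y z = f x (y + z) 0 + μ (y + z) * f 0 (y / (y + z)) (z / (y + z))) :
    ∃ (b : ℝ) (ψ : ℝ → ℝ), ∀ x y z : ℝ, 0 < x → 0 < y → 0 < z →
      f x y z = b * (μ x + μ y + μ z) + ψ (x + y + z) := by
  have hf : IsSymmetricEntropySolution μ f := ⟨hsym1, hsym2, heq⟩
  obtain ⟨b, hb⟩ := hf.exists_binary_eq hmul hnotadd
  refine ⟨b, fun s => f (s / 2) (s / 2) 0 - 2 * b * μ (s / 2), fun x y z hx hy hz => ?_⟩
  have hyz : 0 < y + z := add_pos hy hz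
  have hsplit := hf.entropy_eq_one_sub hx hy hz
  rw [mul_binary_eq hmul hb hy (lt_add_of_pos_right y hz), add_sub_cancel_left] at hsplit
  have hboundary := boundary_sub_eq_midpoint hf hmul hb hx hyz
  rw [← add_assoc] at hboundary
  linear_combination hsplit + hboundary

theorem stmt_13 (μ : ℝ → ℝ) (f : ℝ → ℝ → ℝ → ℝ)
    (hmul : ∀ x y : ℝ, 0 < x → 0 < y → μ (x * y) = μ x * μ y)
    (hnot1 : ¬ (∀ x : ℝ, 0 < x → μ x = 1))
    (hnotadd : ¬ (∀ x y : ℝ, 0 < x → 0 < y → μ (x + y) = μ x + μ y))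
    (hsym1 : ∀ x y z : ℝ, f x y z = f y x z)
    (hsym2 : ∀ x y z : ℝ, f x y z = f x z y)
    (heq : ∀ x y z : ℝ, 0 < x → 0 < y → 0 < z →
      f x y z = f x (y + z) 0 + μ (y + z) * f 0 (y / (y + z)) (z / (y + z))) :
    ∃ (b : ℝ) (ψ : ℝ → ℝ), ∀ x y z : ℝ, 0 < x → 0 < y → 0 < z →
      f x y z = b * (μ x + μ y + μ z) + ψ (x + y + z) :=
  stmt_13_general μ f hmul hnotadd hsym1 hsym2 heq
end

section
/- Let f : [0,∞)³ → ℝ be symmetric, satisfy f(x,y,z) = f(x, y+z, 0) + (y+z)·f(0, y/(y+z), z/(y+z)) for all x, y, z > 0, and suppose the map (x,y) ↦ f(0,x,y) is continuous on (0,∞)². Then there exist a constant c ∈ ℝ and a continuous function Ψ : (0,∞) → ℝ such that f(x,y,z) = c(x·ln x + y·ln y + z·ln z) + Ψ(x+y+z) for all x, y, z > 0. -/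
/-!
With `φ p = f 0 p (1 - p)`, the modified entropy equation and the symmetry of `f` give
`f x y z = f 0 x (y + z) + (y + z) * φ (y / (y + z))`, and comparing this with the same identity
for `f y x z` shows that `φ` is a symmetric solution of the fundamental equation of information.

Integrating that equation in `y` over a small interval expresses `φ x` through integrals of `φ`
whose bounds depend smoothly on `x`, so the merely continuous `φ` is `C¹`. Differentiating in `x`
and passing to logistic coordinates `p = sigmoid s`, the increments of `s ↦ φ' (sigmoid s)` depend
only on the step, so this map is affine by Cauchy's equation; since
`deriv binEntropy (sigmoid s) = -s`, `φ` is then `c • binEntropy` up to an affine function,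
which symmetry and the equation force to vanish.

Finally `f x y z - c' (x log x + y log y + z log z)` depends only on `x` and `y + z` and is
unchanged when `x` and `y` are exchanged, hence only on `x + y + z`.
-/

open Set Real intervalIntegral Topology

def FundamentalEqInfo (φ : ℝ → ℝ) : Prop :=
  ∀ x y : ℝ, 0 < x → 0 < y → x + y < 1 →
    φ x + (1 - x) * φ (y / (1 - x)) = φ y + (1 - y) * φ (x / (1 - y))

lemma div_one_sub_mem_Ioo {x y : ℝ} (hx : 0 < x) (hxy : x + y < 1) :
    x / (1 - y) ∈ Ioo (0 : ℝ) 1 :=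
  ⟨div_pos hx (by linarith), (div_lt_one (by linarith)).2 (by linarith)⟩

lemma div_add_mem_Ioo {y z : ℝ} (hy : 0 < y) (hz : 0 < z) : y / (y + z) ∈ Ioo (0 : ℝ) 1 :=
  ⟨by positivity, (div_lt_one (by positivity)).2 (by linarith)⟩

theorem contDiffOn_integral_Ioo {ψ : ℝ → ℝ} {l r c : ℝ} (hψ : ContinuousOn ψ (Ioo l r))
    (hc : c ∈ Ioo l r) : ContDiffOn ℝ 1 (fun v => ∫ t in c..v, ψ t) (Ioo l r) := by
  have hderiv : ∀ v ∈ Ioo l r, HasDerivAt (fun v => ∫ t in c..v, ψ t) (ψ v) v := fun v hv =>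
    integral_hasDerivAt_right (hψ.mono (ordConnected_Ioo.uIcc_subset hc hv)).intervalIntegrable
      (hψ.stronglyMeasurableAtFilter isOpen_Ioo v hv) (hψ.continuousAt (isOpen_Ioo.mem_nhds hv))
  rw [show (1 : WithTop ℕ∞) = 0 + 1 from rfl, contDiffOn_succ_iff_deriv_of_isOpen isOpen_Ioo]
  refine ⟨fun v hv => (hderiv v hv).differentiableAt.differentiableWithinAt, by simp, ?_⟩
  exact contDiffOn_zero.2 (hψ.congr fun v hv => (hderiv v hv).deriv)

theorem contDiffAt_intervalIntegral_Ioo {ψ α β : ℝ → ℝ} {l r x₀ : ℝ}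
    (hψ : ContinuousOn ψ (Ioo l r)) (hα : ContDiffAt ℝ 1 α x₀) (hβ : ContDiffAt ℝ 1 β x₀)
    (hαx₀ : α x₀ ∈ Ioo l r) (hβx₀ : β x₀ ∈ Ioo l r) :
    ContDiffAt ℝ 1 (fun x => ∫ t in α x..β x, ψ t) x₀ := by
  have hP := contDiffOn_integral_Ioo hψ hαx₀
  refine ContDiffAt.congr_of_eventuallyEq
    (((hP.contDiffAt (isOpen_Ioo.mem_nhds hβx₀)).comp x₀ hβ).sub
      ((hP.contDiffAt (isOpen_Ioo.mem_nhds hαx₀)).comp x₀ hα)) ?_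
  filter_upwards [hα.continuousAt.eventually_mem (isOpen_Ioo.mem_nhds hαx₀),
    hβ.continuousAt.eventually_mem (isOpen_Ioo.mem_nhds hβx₀)] with x hαx hβx
  exact (integral_interval_sub_left
    (hψ.mono (ordConnected_Ioo.uIcc_subset hαx₀ hβx)).intervalIntegrable
    (hψ.mono (ordConnected_Ioo.uIcc_subset hαx₀ hαx)).intervalIntegrable).symm

lemma integral_mul_comp_div_one_sub {φ : ℝ → ℝ} (hc : ContinuousOn φ (Ioo 0 1)) {a b x : ℝ}
    (hab : a ≤ b) (hx : 0 < x) (hxb : x + b < 1) :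
    ∫ y in a..b, (1 - y) * φ (x / (1 - y))
      = x ^ 2 * ∫ u in x / (1 - a)..x / (1 - b), φ u / u ^ 3 := by
  have hmem : ∀ y ∈ uIcc a b, 0 < 1 - y ∧ x / (1 - y) ∈ Ioo (0 : ℝ) 1 := fun y hy => by
    rw [uIcc_of_le hab] at hy
    exact ⟨by linarith [hy.2], div_one_sub_mem_Ioo hx (by linarith [hy.2])⟩
  have hder : ∀ y ∈ uIcc a b, HasDerivAt (fun y => x / (1 - y)) (x / (1 - y) ^ 2) y :=
    fun y hy => ((hasDerivAt_const y x).div ((hasDerivAt_id' y).const_sub 1)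
      (hmem y hy).1.ne').congr_deriv (by ring)
  have hcont : ContinuousOn (fun y => x / (1 - y) ^ 2) (uIcc a b) :=
    continuousOn_const.div (by fun_prop) fun y hy => pow_ne_zero _ (hmem y hy).1.ne'
  have hg : ContinuousOn (fun u => x ^ 2 * (φ u / u ^ 3)) ((fun y => x / (1 - y)) '' uIcc a b) :=
    (continuousOn_const.mul (hc.div (by fun_prop) fun u hu => pow_ne_zero _ hu.1.ne')).mono
      (image_subset_iff.2 fun y hy => (hmem y hy).2)
  rw [← integral_const_mul, ← integral_comp_mul_deriv' hder hcont hg]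
  refine integral_congr fun y hy => ?_
  have := (hmem y hy).1.ne'
  simp only [Function.comp]
  field_simp

theorem FundamentalEqInfo.integral_identity {φ : ℝ → ℝ} (hφ : FundamentalEqInfo φ)
    (hc : ContinuousOn φ (Ioo 0 1)) {a b x : ℝ} (ha : 0 < a) (hab : a ≤ b) (hx : 0 < x)
    (hxb : x + b < 1) :
    (b - a) * φ x = (∫ y in a..b, φ y) + x ^ 2 * (∫ u in x / (1 - a)..x / (1 - b), φ u / u ^ 3)
      - (1 - x) ^ 2 * ∫ u in a / (1 - x)..b / (1 - x), φ u := by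
  have hmem : ∀ y ∈ uIcc a b, 0 < y ∧ x + y < 1 := fun y hy => by
    rw [uIcc_of_le hab] at hy
    exact ⟨by linarith [hy.1], by linarith [hy.2]⟩
  have h1 : ContinuousOn φ (uIcc a b) :=
    hc.mono fun y hy => ⟨(hmem y hy).1, by linarith [(hmem y hy).2]⟩
  have h2 : ContinuousOn (fun y => (1 - y) * φ (x / (1 - y))) (uIcc a b) :=
    (continuousOn_const.sub continuousOn_id).mul (hc.comp
      (continuousOn_const.div (by fun_prop) fun y hy => by linarith [hmem y hy])
      fun y hy => div_one_sub_mem_Ioo hx (hmem y hy).2)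
  have h3 : ContinuousOn (fun y => (1 - x) * φ (y / (1 - x))) (uIcc a b) :=
    continuousOn_const.mul (hc.comp (by fun_prop) fun y hy =>
      div_one_sub_mem_Ioo (hmem y hy).1 (by linarith [(hmem y hy).2]))
  calc (b - a) * φ x = ∫ _ in a..b, φ x := by simp
    _ = ∫ y in a..b, (φ y + (1 - y) * φ (x / (1 - y)) - (1 - x) * φ (y / (1 - x))) :=
        integral_congr fun y hy => by linarith [hφ x y hx (hmem y hy).1 (hmem y hy).2]
    _ = _ := by
        rw [integral_sub (h1.intervalIntegrable.add h2.intervalIntegrable) h3.intervalIntegrable,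
          integral_add h1.intervalIntegrable h2.intervalIntegrable,
          integral_mul_comp_div_one_sub hc hab hx hxb, integral_const_mul,
          integral_comp_div _ (by linarith), smul_eq_mul]
        ring

theorem FundamentalEqInfo.contDiffOn {φ : ℝ → ℝ} (hφ : FundamentalEqInfo φ)
    (hc : ContinuousOn φ (Ioo 0 1)) : ContDiffOn ℝ 1 φ (Ioo 0 1) := by
  intro x₀ hx₀
  refine ContDiffAt.contDiffWithinAt ?_
  set b := (1 - x₀) / 2
  set a := b / 2
  have hb : 0 < b := by simp only [b]; linarith [hx₀.2]
  have ha : 0 < a := half_pos hb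
  have hab : a < b := half_lt_self hb
  have hx₀b : x₀ + b < 1 := by simp only [b]; linarith [hx₀.2]
  have heq : ∀ᶠ x in 𝓝 x₀, φ x = ((∫ y in a..b, φ y)
      + x ^ 2 * (∫ u in x / (1 - a)..x / (1 - b), φ u / u ^ 3)
      - (1 - x) ^ 2 * ∫ u in a / (1 - x)..b / (1 - x), φ u) / (b - a) := by
    filter_upwards [Ioo_mem_nhds hx₀.1 (show x₀ < 1 - b by linarith)] with x hx
    rw [eq_div_iff (by linarith), mul_comm,
      hφ.integral_identity hc ha hab.le hx.1 (by linarith [hx.2])]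
  refine ContDiffAt.congr_of_eventuallyEq ?_ heq
  have h1x₀ : 1 - x₀ ≠ 0 := by linarith [hx₀.2]
  have hQ := contDiffAt_intervalIntegral_Ioo (x₀ := x₀) (α := fun x => x / (1 - a))
    (β := fun x => x / (1 - b)) (hc.div (by fun_prop) fun u hu => pow_ne_zero 3 hu.1.ne')
    (by fun_prop) (by fun_prop) (div_one_sub_mem_Ioo hx₀.1 (by linarith))
    (div_one_sub_mem_Ioo hx₀.1 hx₀b)
  have hP := contDiffAt_intervalIntegral_Ioo (x₀ := x₀) (α := fun x => a / (1 - x))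
    (β := fun x => b / (1 - x)) hc (by fun_prop (disch := exact h1x₀))
    (by fun_prop (disch := exact h1x₀)) (div_one_sub_mem_Ioo ha (by linarith))
    (div_one_sub_mem_Ioo hb (by linarith))
  fun_prop

theorem FundamentalEqInfo.deriv_eq {φ : ℝ → ℝ} (hφ : FundamentalEqInfo φ)
    (hd : DifferentiableOn ℝ φ (Ioo 0 1)) {x y : ℝ} (hx : 0 < x) (hy : 0 < y) (hxy : x + y < 1) :
    deriv φ x - φ (y / (1 - x)) + y / (1 - x) * deriv φ (y / (1 - x)) = deriv φ (x / (1 - y)) := by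
  have hφ' : ∀ p ∈ Ioo (0 : ℝ) 1, HasDerivAt φ (deriv φ p) p := fun p hp =>
    (hd.differentiableAt (isOpen_Ioo.mem_nhds hp)).hasDerivAt
  have h1x : 1 - x ≠ 0 := by linarith
  have h1y : 1 - y ≠ 0 := by linarith
  have hu : HasDerivAt (fun z => y / (1 - z)) (y / (1 - x) ^ 2) x :=
    ((hasDerivAt_const x y).div ((hasDerivAt_id' x).const_sub 1) h1x).congr_deriv (by ring)
  have hL : HasDerivAt (fun z => φ z + (1 - z) * φ (y / (1 - z)))
      (deriv φ x - φ (y / (1 - x)) + y / (1 - x) * deriv φ (y / (1 - x))) x := by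
    refine ((hφ' x ⟨hx, by linarith⟩).add (((hasDerivAt_id' x).const_sub 1).mul
      ((hφ' _ (div_one_sub_mem_Ioo hy (by linarith))).comp x hu))).congr_deriv ?_
    simp only [Function.comp_apply]
    field_simp
    ring
  have hR : HasDerivAt (fun z => φ y + (1 - y) * φ (z / (1 - y))) (deriv φ (x / (1 - y))) x := by
    refine (((hφ' _ (div_one_sub_mem_Ioo hx hxy)).comp x
      ((hasDerivAt_id' x).div_const (1 - y))).const_mul (1 - y)).const_add (φ y) |>.congr_deriv ?_
    field_simp
  refine hL.unique (hR.congr_of_eventuallyEq ?_)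
  filter_upwards [Ioo_mem_nhds hx (show x < 1 - y by linarith)] with z hz
  exact hφ z y hz.1 hy (by linarith [hz.2])

lemma sigmoid_add (s d : ℝ) :
    sigmoid (s + d) = sigmoid s / (1 - (1 - exp (-d)) * (1 - sigmoid s)) := by
  have : 0 < 1 + exp (-s) * exp (-d) := by positivity
  simp only [sigmoid_def, neg_add, exp_add]
  field_simp
  rw [show 1 + exp (-s) - (1 - exp (-d)) * (1 + exp (-s) - 1) = 1 + exp (-s) * exp (-d) by ring,
    div_self this.ne']

lemma deriv_binEntropy_sigmoid (s : ℝ) : deriv binEntropy (sigmoid s) = -s := by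
  rw [deriv_binEntropy, ← sigmoid_neg, ← sigmoid_mul_rexp_neg,
    log_mul (sigmoid_pos s).ne' (exp_pos _).ne', log_exp]
  ring

theorem eq_add_mul_of_add_sub_eq {h : ℝ → ℝ} (hc : Continuous h)
    (hh : ∀ s d, 0 < d → h (s + d) - h s = h d - h 0) (s : ℝ) : h s = h 0 + s * (h 1 - h 0) := by
  have hadd : ∀ s t, h (s + t) - h 0 = (h s - h 0) + (h t - h 0) := by
    intro s t
    rcases lt_trichotomy t 0 with ht | rfl | ht
    · have h1 := hh (s + t) (-t) (by linarith)
      have h2 := hh t (-t) (by linarith)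
      simp only [add_neg_cancel_right, add_neg_cancel] at h1 h2
      linarith
    · simp
    · linarith [hh s t ht]
  let H : ℝ →+ ℝ := AddMonoidHom.mk' (fun s => h s - h 0) hadd
  have := map_real_smul H (hc.sub continuous_const) s 1
  simp only [smul_eq_mul, mul_one, H, AddMonoidHom.mk'_apply] at this
  linarith

theorem FundamentalEqInfo.deriv_sigmoid_add_sub {φ : ℝ → ℝ} (hφ : FundamentalEqInfo φ)
    (hd : DifferentiableOn ℝ φ (Ioo 0 1)) (s d : ℝ) (hd0 : 0 < d) :
    deriv φ (sigmoid (s + d)) - deriv φ (sigmoid s)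
      = deriv φ (sigmoid d) - deriv φ (sigmoid 0) := by
  set u := 1 - exp (-d)
  have hu : u ∈ Ioo (0 : ℝ) 1 := ⟨by simp [u, hd0], by simp only [u]; linarith [exp_pos (-d)]⟩
  have key : ∀ s, deriv φ (sigmoid (s + d)) = deriv φ (sigmoid s) - φ u + u * deriv φ u := by
    intro s
    have h1 : 0 < 1 - sigmoid s := by linarith [sigmoid_lt_one s]
    have h := hφ.deriv_eq hd (sigmoid_pos s) (mul_pos hu.1 h1) (by nlinarith [hu.2, sigmoid_pos s])
    rwa [mul_div_cancel_right₀ _ h1.ne', ← sigmoid_add, eq_comm] at h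
  have key0 := key 0
  rw [zero_add] at key0
  rw [key s, key0]
  ring

lemma mul_binEntropy_div {y z : ℝ} (hy : 0 < y) (hz : 0 < z) :
    (y + z) * binEntropy (y / (y + z)) = negMulLog y + negMulLog z - negMulLog (y + z) := by
  have hyz : 0 < y + z := by positivity
  rw [binEntropy_eq_negMulLog_add_negMulLog_one_sub,
    show 1 - y / (y + z) = z / (y + z) by field_simp; ring]
  simp only [negMulLog, log_div hy.ne' hyz.ne', log_div hz.ne' hyz.ne']
  field_simp
  ring

theorem fundamentalEqInfo_binEntropy : FundamentalEqInfo binEntropy := by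
  intro x y hx hy hxy
  have hz : 0 < 1 - x - y := by linarith
  have h1 := mul_binEntropy_div hy hz
  have h2 := mul_binEntropy_div hx hz
  rw [show y + (1 - x - y) = 1 - x by ring] at h1
  rw [show x + (1 - x - y) = 1 - y by ring] at h2
  simp only [binEntropy_eq_negMulLog_add_negMulLog_one_sub x,
    binEntropy_eq_negMulLog_add_negMulLog_one_sub y] at *
  linarith

theorem FundamentalEqInfo.add_const_mul {φ ψ : ℝ → ℝ} (hφ : FundamentalEqInfo φ)
    (hψ : FundamentalEqInfo ψ) (c : ℝ) : FundamentalEqInfo fun p => φ p + c * ψ p := by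
  intro x y hx hy hxy
  linear_combination hφ x y hx hy hxy + c * hψ x y hx hy hxy

theorem FundamentalEqInfo.eq_zero_of_eqOn_affine {φ : ℝ → ℝ} {m C : ℝ} (hφ : FundamentalEqInfo φ)
    (hsymm : ∀ p ∈ Ioo (0 : ℝ) 1, φ (1 - p) = φ p) (haff : EqOn φ (fun p => m * p + C) (Ioo 0 1)) :
    EqOn φ 0 (Ioo 0 1) := by
  -- `p ↦ m * p` solves the equation; only the symmetry rules it out.
  have hfei := hφ (1 / 4) (1 / 2) (by norm_num) (by norm_num) (by norm_num)
  have hsym := hsymm (1 / 4) (by norm_num)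
  norm_num [haff (show (1 / 4 : ℝ) ∈ Ioo 0 1 by norm_num),
    haff (show (3 / 4 : ℝ) ∈ Ioo 0 1 by norm_num), haff (show (1 / 2 : ℝ) ∈ Ioo 0 1 by norm_num),
    haff (show (2 / 3 : ℝ) ∈ Ioo 0 1 by norm_num)] at hfei hsym
  intro p hp
  rw [haff hp, Pi.zero_apply, hsym]
  linarith

theorem FundamentalEqInfo.exists_eq_mul_binEntropy {φ : ℝ → ℝ} (hφ : FundamentalEqInfo φ)
    (hc : ContinuousOn φ (Ioo 0 1)) (hsymm : ∀ p ∈ Ioo (0 : ℝ) 1, φ (1 - p) = φ p) :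
    ∃ c, ∀ p ∈ Ioo (0 : ℝ) 1, φ p = c * binEntropy p := by
  have hC1 := hφ.contDiffOn hc
  have hd : DifferentiableOn ℝ φ (Ioo 0 1) := hC1.differentiableOn one_ne_zero
  have hsig : Continuous fun s => deriv φ (sigmoid s) :=
    (hC1.continuousOn_deriv_of_isOpen isOpen_Ioo le_rfl).comp_continuous continuous_sigmoid
      fun s => ⟨sigmoid_pos s, sigmoid_lt_one s⟩
  have haff := eq_add_mul_of_add_sub_eq hsig (hφ.deriv_sigmoid_add_sub hd)
  set m := deriv φ (sigmoid 0)
  set κ := deriv φ (sigmoid 1) - m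
  set ψ := fun p => φ p + κ * binEntropy p
  have hψ : ∀ p ∈ Ioo (0 : ℝ) 1, HasDerivAt ψ (m * 1) p := by
    rintro p hp
    obtain ⟨s, rfl⟩ : p ∈ range sigmoid := range_sigmoid ▸ hp
    have h := (hd.differentiableAt (isOpen_Ioo.mem_nhds hp)).hasDerivAt.add
      ((hasDerivAt_binEntropy hp.1.ne' hp.2.ne).const_mul κ)
    rw [← deriv_binEntropy, deriv_binEntropy_sigmoid, haff s] at h
    exact h.congr_deriv (by ring)
  obtain ⟨C, hC⟩ := isOpen_Ioo.exists_eq_add_of_deriv_eq isPreconnected_Ioo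
    (fun p hp => (hψ p hp).differentiableAt.differentiableWithinAt)
    (differentiableOn_id.const_mul m) (fun p hp => by
      rw [(hψ p hp).deriv, ((hasDerivAt_id p).const_mul m).deriv])
  have hψ0 := (hφ.add_const_mul fundamentalEqInfo_binEntropy κ).eq_zero_of_eqOn_affine
    (fun p hp => by simp only [binEntropy_one_sub, hsymm p hp]) hC
  refine ⟨-κ, fun p hp => ?_⟩
  have := hψ0 hp
  simp only [Pi.zero_apply] at this
  linarith

section ModifiedEntropyEquation

variable {f : ℝ → ℝ → ℝ → ℝ}

lemma modifiedEntropy_split (hsym1 : ∀ x y z : ℝ, f x y z = f y x z)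
    (hsym2 : ∀ x y z : ℝ, f x y z = f x z y)
    (heq : ∀ x y z : ℝ, 0 < x → 0 < y → 0 < z →
      f x y z = f x (y + z) 0 + (y + z) * f 0 (y / (y + z)) (z / (y + z)))
    (x y z : ℝ) (hx : 0 < x) (hy : 0 < y) (hz : 0 < z) :
    f x y z = f 0 x (y + z) + (y + z) * f 0 (y / (y + z)) (1 - y / (y + z)) := by
  rw [heq x y z hx hy hz, hsym2 x, hsym1 x, show 1 - y / (y + z) = z / (y + z) by field_simp; ring]

lemma fundamentalEqInfo_of_split (hsym1 : ∀ x y z : ℝ, f x y z = f y x z)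
    (hsplit : ∀ x y z : ℝ, 0 < x → 0 < y → 0 < z →
      f x y z = f 0 x (y + z) + (y + z) * f 0 (y / (y + z)) (1 - y / (y + z))) :
    FundamentalEqInfo fun p => f 0 p (1 - p) := by
  intro x y hx hy hxy
  have h := hsplit x y (1 - x - y) hx hy (by linarith)
  rw [hsym1, hsplit y x (1 - x - y) hy hx (by linarith)] at h
  rw [show x + (1 - x - y) = 1 - y by ring, show y + (1 - x - y) = 1 - x by ring] at h
  linarith

lemma one_sub_symm_of_split (hsym2 : ∀ x y z : ℝ, f x y z = f x z y)
    (hsplit : ∀ x y z : ℝ, 0 < x → 0 < y → 0 < z →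
      f x y z = f 0 x (y + z) + (y + z) * f 0 (y / (y + z)) (1 - y / (y + z)))
    (p : ℝ) (hp : p ∈ Ioo (0 : ℝ) 1) : f 0 (1 - p) (1 - (1 - p)) = f 0 p (1 - p) := by
  have h := hsplit 1 p (1 - p) one_pos hp.1 (by linarith [hp.2])
  rw [hsym2, hsplit 1 (1 - p) p one_pos (by linarith [hp.2]) hp.1] at h
  simp only [add_sub_cancel, sub_add_cancel, div_one, one_mul] at h
  linarith

end ModifiedEntropyEquation

lemma eq_diag_of_exchange {W : ℝ → ℝ → ℝ}
    (hW : ∀ x y z : ℝ, 0 < x → 0 < y → 0 < z → W x (y + z) = W y (x + z)) {x s : ℝ}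
    (hx : 0 < x) (hs : 0 < s) : W x s = W ((x + s) / 2) ((x + s) / 2) := by
  obtain ⟨w, hw, hwm⟩ := exists_between (lt_min hx hs)
  obtain ⟨hwx, hws⟩ := lt_min_iff.1 hwm
  have h1 := hW x w (s - w) hx hw (by linarith)
  have h2 := hW ((x + s) / 2) w ((x + s) / 2 - w) (by linarith) hw (by linarith)
  rw [add_sub_cancel] at h1 h2
  rw [h1, h2]
  ring_nf

theorem stmt_16 (f : ℝ → ℝ → ℝ → ℝ)
    (hsym1 : ∀ x y z : ℝ, f x y z = f y x z)
    (hsym2 : ∀ x y z : ℝ, f x y z = f x z y)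
    (heq : ∀ x y z : ℝ, 0 < x → 0 < y → 0 < z →
      f x y z = f x (y + z) 0 + (y + z) * f 0 (y / (y + z)) (z / (y + z)))
    (hcont : ContinuousOn (fun p : ℝ × ℝ => f 0 p.1 p.2) (Ioi (0:ℝ) ×ˢ Ioi (0:ℝ))) :
    ∃ (c : ℝ) (Ψ : ℝ → ℝ), ContinuousOn Ψ (Ioi (0:ℝ)) ∧
      ∀ x y z : ℝ, 0 < x → 0 < y → 0 < z →
        f x y z = c * (x * Real.log x + y * Real.log y + z * Real.log z) +
          Ψ (x + y + z) := by
  have hsplit := modifiedEntropy_split hsym1 hsym2 heq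
  have hcφ : ContinuousOn (fun p => f 0 p (1 - p)) (Ioo 0 1) :=
    hcont.comp (f := fun p => (p, 1 - p)) (by fun_prop) fun p hp => ⟨hp.1, sub_pos.2 hp.2⟩
  obtain ⟨c, hc⟩ := (fundamentalEqInfo_of_split hsym1 hsplit).exists_eq_mul_binEntropy hcφ
    (one_sub_symm_of_split hsym2 hsplit)
  set W := fun x s => f 0 x s - c * (negMulLog x + negMulLog s)
  have hf : ∀ x y z : ℝ, 0 < x → 0 < y → 0 < z →
      f x y z = c * (negMulLog x + negMulLog y + negMulLog z) + W x (y + z) := by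
    intro x y z hx hy hz
    rw [hsplit x y z hx hy hz, hc _ (div_add_mem_Ioo hy hz), ← mul_assoc, mul_comm _ c, mul_assoc,
      mul_binEntropy_div hy hz]
    ring
  have hW : ∀ x y z : ℝ, 0 < x → 0 < y → 0 < z → W x (y + z) = W y (x + z) := by
    intro x y z hx hy hz
    have h := hf x y z hx hy hz
    rw [hsym1, hf y x z hy hx hz] at h
    linarith
  refine ⟨-c, fun t => W (t / 2) (t / 2), ?_, fun x y z hx hy hz => ?_⟩
  · refine ContinuousOn.sub (hcont.comp (f := fun t => (t / 2, t / 2)) (by fun_prop) fun t ht => ?_)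
      (by fun_prop)
    exact ⟨half_pos (mem_Ioi.1 ht), half_pos (mem_Ioi.1 ht)⟩
  · rw [hf x y z hx hy hz, eq_diag_of_exchange hW hx (by positivity), ← add_assoc]
    simp only [negMulLog]
    ring
end

section
/- Let f be defined on D = {(x,y,z) ∈ ℝ³ : x,y,z ≥ 0, x+y+z > 0}, symmetric, positively homogeneous of degree 1 (f(λx,λy,λz) = λf(x,y,z) for λ > 0), satisfying f(x,y,z) = f(x+y, z, 0) + f(x,y,0) whenever xy+yz+zx > 0, and suppose x ↦ f(1−x, x, 0) is continuous at a point of (0,1). Then f(x,y,z) = x·log x + y·log y + z·log z − (x+y+z)·log(x+y+z) on D (with some fixed logarithm base and the convention 0·log 0 = 0). -/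
/-!
Put `g t := f (1 - t) t 0`. Homogeneity and the entropy equation turn `g` into a solution of the
fundamental equation of information
`g x + (1 - x) g (y / (1 - x)) = g y + (1 - y) g (x / (1 - y))`, from which `f` is recovered.

Read at a fixed `x` as an identity in `y`, the equation transports local information about `g`
between nearby points. Starting from the point `x₀` of continuity, this shows that `g` is locally
bounded on `(0, 1)` (an open-closed argument), hence bounded; that the oscillation of `g` shrinks
by the factor `1 - x₀ / 2` at each transport, so `g` is continuous on `(0, 1)`; and, halving `y`,
that `g → 0` at the endpoints. Integrating the equation over `y ∈ [0, 1 - x]` expresses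
`(1 - x) g x` through integrals of `g`, so `g` is differentiable, and differentiating once more
gives `g'' = -2 (∫₀¹ g) / (x (1 - x))`. With `g 0 = g 1 = 0` this forces `g = c · binEntropy`.
-/

open Set Filter Topology Asymptotics

namespace Entropy

theorem forall_pos_of_contraction {P : ℝ → Prop} {θ M : ℝ} (hθ₀ : 0 ≤ θ) (hθ₁ : θ < 1)
    (hM : 0 ≤ M) (hP : Monotone P) (hPM : P M)
    (hstep : ∀ V, 0 ≤ V → P V → ∀ ε > 0, P (θ * V + ε)) : ∀ ε > 0, P ε := by
  have hiter : ∀ n : ℕ, ∀ ε > 0, P (θ ^ n * M + ε) := by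
    intro n
    induction n with
    | zero => exact fun ε hε ↦ hP (by simp [hε.le]) hPM
    | succ n ih =>
      intro ε hε
      refine hP ?_ (hstep _ (by positivity) (ih (ε / 2) (by positivity)) (ε / 2) (by positivity))
      rw [pow_succ]
      nlinarith
  intro ε hε
  obtain ⟨n, hn⟩ := ((tendsto_pow_atTop_nhds_zero_of_lt_one hθ₀ hθ₁).mul_const M).eventually
    (gt_mem_nhds (show 0 * M < ε / 2 by linarith)) |>.exists
  exact hP (by linarith) (hiter n (ε / 2) (by positivity))

theorem _root_.IsCompact.isBigO_one_principal {X E : Type*} [TopologicalSpace X] [Norm E]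
    {K : Set X} {f : X → E} (hK : IsCompact K) (hf : ∀ x ∈ K, f =O[𝓝 x] fun _ ↦ (1 : ℝ)) :
    f =O[𝓟 K] fun _ ↦ (1 : ℝ) := by
  refine hK.induction_on (p := fun s ↦ f =O[𝓟 s] fun _ ↦ (1 : ℝ))
    (by simpa using isBigO_bot (f := f) (g := fun _ : X ↦ (1 : ℝ)))
    (fun s t hst h ↦ h.mono (principal_mono.2 hst))
    (fun s t hs ht ↦ by rw [← sup_principal]; exact hs.sup ht) fun x hx ↦ ?_
  obtain ⟨c, hc⟩ := (hf x hx).bound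
  exact ⟨_, mem_nhdsWithin_of_mem_nhds hc, IsBigO.of_bound c (eventually_principal.2 fun _ h ↦ h)⟩

theorem _root_.ContinuousAt.eventually_abs_sub_lt {c : ℝ → ℝ} {b ε : ℝ} (hc : ContinuousAt c b)
    (hε : 0 < ε) : ∀ᶠ p : ℝ × ℝ in 𝓝 (b, b), |c p.1 - c p.2| < ε := by
  have : Tendsto (fun p : ℝ × ℝ ↦ c p.1 - c p.2) (𝓝 (b, b)) (𝓝 0) := by
    rw [← sub_self (c b)]
    exact (hc.tendsto.comp (continuous_fst.tendsto (b, b))).sub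
      (hc.tendsto.comp (continuous_snd.tendsto (b, b)))
  filter_upwards [this.eventually (Metric.ball_mem_nhds 0 hε)] with p hp
  simpa [Real.dist_eq] using hp

def FundamentalEq (g : ℝ → ℝ) : Prop :=
  ∀ x y : ℝ, 0 < x → 0 < y → x + y ≤ 1 →
    g x + (1 - x) * g (y / (1 - x)) = g y + (1 - y) * g (x / (1 - y))

variable {g : ℝ → ℝ}

theorem FundamentalEq.apply_one_sub (hg : FundamentalEq g) (h1 : g 1 = 0) {t : ℝ}
    (ht₀ : 0 < t) (ht₁ : t < 1) : g (1 - t) = g t := by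
  have h := hg t (1 - t) ht₀ (by linarith) (by linarith)
  rw [div_self (by linarith), sub_sub_cancel, div_self ht₀.ne', h1] at h
  linarith

theorem FundamentalEq.apply_half (hg : FundamentalEq g) {y : ℝ} (hy₀ : 0 < y) (hy : y ≤ 1 / 2) :
    g y = g (1 / 2) + g (2 * y) / 2 - (1 - y) * g (1 / (2 * (1 - y))) := by
  have h := hg (1 / 2) y (by norm_num) hy₀ (by linarith)
  rw [show y / (1 - 1 / 2) = 2 * y by ring, div_div] at h
  linarith

theorem isBigO_one_sub_mul_comp {x y : ℝ} (hy : y ≠ 1)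
    (hc : g =O[𝓝 (x / (1 - y))] fun _ ↦ (1 : ℝ)) :
    (fun u ↦ (1 - u) * g (x / (1 - u))) =O[𝓝 y] fun _ ↦ (1 : ℝ) := by
  have hc' : (fun u ↦ g (x / (1 - u))) =O[𝓝 y] fun _ ↦ (1 : ℝ) :=
    hc.comp_tendsto (by apply ContinuousAt.tendsto; fun_prop (disch := exact sub_ne_zero.2 hy.symm))
  simpa using ((continuous_const.sub continuous_id).continuousAt.isBigO_one ℝ).mul hc'

theorem FundamentalEq.isBigO_one_of_div (hg : FundamentalEq g) {x y : ℝ} (hx : 0 < x)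
    (hy : 0 < y) (hxy : x + y < 1) (hb : g =O[𝓝 (y / (1 - x))] fun _ ↦ (1 : ℝ))
    (hc : g =O[𝓝 (x / (1 - y))] fun _ ↦ (1 : ℝ)) : g =O[𝓝 y] fun _ ↦ (1 : ℝ) := by
  have hg_eq : ∀ᶠ u in 𝓝 y,
      g x + (1 - x) * g (u / (1 - x)) - (1 - u) * g (x / (1 - u)) = g u := by
    filter_upwards [Ioo_mem_nhds hy (show y < 1 - x by linarith)] with u hu
    linarith [hg x u hx hu.1 (by linarith [hu.2])]
  have hb' : (fun u ↦ g (u / (1 - x))) =O[𝓝 y] fun _ ↦ (1 : ℝ) :=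
    hb.comp_tendsto (by apply Continuous.tendsto'; fun_prop; rfl)
  refine IsBigO.congr' ?_ hg_eq EventuallyEq.rfl
  exact ((isBigO_const_one ℝ (g x) _).add (hb'.const_mul_left (1 - x))).sub
    (isBigO_one_sub_mul_comp (by linarith) hc)

theorem FundamentalEq.isBigO_one_div (hg : FundamentalEq g) {x y : ℝ} (hx : 0 < x)
    (hy : 0 < y) (hxy : x + y < 1) (ha : g =O[𝓝 y] fun _ ↦ (1 : ℝ))
    (hc : g =O[𝓝 (x / (1 - y))] fun _ ↦ (1 : ℝ)) : g =O[𝓝 (y / (1 - x))] fun _ ↦ (1 : ℝ) := by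
  have h1x : 0 < 1 - x := by linarith
  have hk : Tendsto (fun z ↦ z * (1 - x)) (𝓝 (y / (1 - x))) (𝓝 y) := by
    apply Continuous.tendsto'
    · fun_prop
    · exact div_mul_cancel₀ y h1x.ne'
  have hg_eq : ∀ᶠ z in 𝓝 (y / (1 - x)),
      (1 - x)⁻¹ * (g (z * (1 - x)) + (1 - z * (1 - x)) * g (x / (1 - z * (1 - x))) - g x) =
        g z := by
    filter_upwards [hk.eventually (Ioo_mem_nhds hy (show y < 1 - x by linarith))] with z hz
    have h := hg x (z * (1 - x)) hx hz.1 (by linarith [hz.2])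
    rw [mul_div_cancel_right₀ z h1x.ne'] at h
    rw [inv_mul_eq_iff_eq_mul₀ h1x.ne']
    linarith
  refine IsBigO.congr' ?_ hg_eq EventuallyEq.rfl
  exact (((ha.add (isBigO_one_sub_mul_comp (by linarith) hc)).comp_tendsto hk).sub
    (isBigO_const_one ℝ (g x) _)).const_mul_left (1 - x)⁻¹

theorem FundamentalEq.isBigO_one_of_continuousAt (hg : FundamentalEq g) {x₀ : ℝ}
    (hx₀ : x₀ ∈ Ioo (0 : ℝ) 1) (hc : ContinuousAt g x₀) {b : ℝ} (hb : b ∈ Ioo (0 : ℝ) 1) :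
    g =O[𝓝 b] fun _ ↦ (1 : ℝ) := by
  obtain ⟨hx₀0, hx₀1⟩ := hx₀
  set U := {b : ℝ | g =O[𝓝 b] fun _ ↦ (1 : ℝ)}
  have hU : IsOpen U := by
    simp only [U, isBigO_iff, ofPred_exists]
    exact isOpen_iUnion fun c ↦ isOpen_setOfPred_eventually_nhds
  refine isPreconnected_Ioo.subset_of_closure_inter_subset hU ⟨x₀, ⟨hx₀0, hx₀1⟩, hc.isBigO_one ℝ⟩
    ?_ hb
  rintro b ⟨hbU, hb0, hb1⟩
  -- `isBigO_one_div` with `x := x₀ (1 - b')` moves boundedness from `b'` to `T b'`, then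
  -- `isBigO_one_of_div` with `x := 1 - b / T b'` moves it from `T b'` and `ρ b'` to `b`.
  -- Since `ρ b = x₀ ∈ U` and `U` is open, a suitable `b' ∈ U` exists near `b`.
  set T : ℝ → ℝ := fun b' ↦ b' / (1 - x₀ * (1 - b'))
  set ρ : ℝ → ℝ := fun b' ↦ (1 - b / T b') / (1 - b)
  have hTb : b < T b := by
    rw [lt_div_iff₀ (by nlinarith)]; nlinarith [mul_pos (mul_pos hb0 hx₀0) (sub_pos.2 hb1)]
  have hT : ContinuousAt T b := by
    fun_prop (disch := exact ne_of_gt (by nlinarith))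
  have hρ : Tendsto ρ (𝓝 b) (𝓝 x₀) := by
    have : ρ b = x₀ := by
      simp only [ρ, T]; field_simp; ring
    rw [← this]
    apply ContinuousAt.tendsto
    fun_prop (disch := first | exact ne_of_gt (by nlinarith) | exact (hb0.trans hTb).ne')
  have hev : ∀ᶠ b' in 𝓝 b, b' ∈ Ioo 0 1 ∧ b < T b' ∧ ρ b' ∈ U := by
    filter_upwards [Ioo_mem_nhds hb0 hb1, hT.eventually (lt_mem_nhds hTb),
      hρ.eventually (hU.mem_nhds (hc.isBigO_one ℝ))] with b' h₁ h₂ h₃ using ⟨h₁, h₂, h₃⟩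
  obtain ⟨b', hb'U, ⟨hb'0, hb'1⟩, hbT, hρU⟩ :=
    ((mem_closure_iff_frequently.1 hbU).and_eventually hev).exists
  have hD : 0 < 1 - x₀ * (1 - b') := by nlinarith
  have hT1 : T b' < 1 := by rw [div_lt_one hD]; nlinarith
  have hTU : T b' ∈ U := hg.isBigO_one_div (mul_pos hx₀0 (sub_pos.2 hb'1)) hb'0 (by nlinarith)
    hb'U (by rw [mul_div_cancel_right₀ _ (sub_pos.2 hb'1).ne']; exact hc.isBigO_one ℝ)
  have hT0 : 0 < T b' := hb0.trans hbT
  have hbbT : b < b / T b' := by rw [lt_div_iff₀ hT0]; nlinarith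
  exact hg.isBigO_one_of_div (by rwa [sub_pos, div_lt_one hT0]) hb0 (by linarith)
    (by rwa [sub_sub_cancel, div_div_cancel₀ hb0.ne']) hρU

theorem FundamentalEq.abs_le_four_mul (hg : FundamentalEq g) {M₀ : ℝ}
    (hM₀ : ∀ y ∈ Icc (1 / 4 : ℝ) (2 / 3), |g y| ≤ M₀) {y : ℝ} (hy₀ : 0 < y) (hy : y ≤ 1 / 2) :
    |g y| ≤ 4 * M₀ := by
  have hM₀0 : 0 ≤ M₀ := (abs_nonneg _).trans (hM₀ (1 / 2) (by norm_num))
  have hhalf := hM₀ (1 / 2) (by norm_num)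
  obtain ⟨n, hn⟩ := exists_pow_lt_of_lt_one (by linarith : (0 : ℝ) < 4 * y)
    (by norm_num : (1 / 2 : ℝ) < 1)
  induction n generalizing y with
  | zero => linarith [hM₀ y ⟨by rw [pow_zero] at hn; linarith, by linarith⟩]
  | succ n ih =>
    rcases le_or_gt (1 / 4) y with hy' | hy'
    · linarith [hM₀ y ⟨hy', by linarith⟩]
    have h2y := ih (y := 2 * y) (by linarith) (by linarith) (by rw [pow_succ] at hn; linarith)
    have hz : |(1 - y) * g (1 / (2 * (1 - y)))| ≤ M₀ := by
      rw [abs_mul, abs_of_pos (by linarith)]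
      refine (mul_le_of_le_one_left (abs_nonneg _) (by linarith)).trans (hM₀ _ ⟨?_, ?_⟩)
      · rw [le_div_iff₀ (by linarith)]; linarith
      · rw [div_le_iff₀ (by linarith)]; linarith
    rw [hg.apply_half hy₀ hy]
    rw [abs_le] at *
    constructor <;> linarith

theorem FundamentalEq.exists_bound (hg : FundamentalEq g) (h1 : g 1 = 0)
    (hb : ∀ b ∈ Ioo (0 : ℝ) 1, g =O[𝓝 b] fun _ ↦ (1 : ℝ)) :
    ∃ M, ∀ y ∈ Ioo (0 : ℝ) 1, |g y| ≤ M := by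
  obtain ⟨M₀, hM₀⟩ := isBigO_principal.1 <| isCompact_Icc.isBigO_one_principal
    fun y (hy : y ∈ Icc (1 / 4 : ℝ) (2 / 3)) ↦ hb y ⟨by linarith [hy.1], by linarith [hy.2]⟩
  simp only [norm_one, mul_one, Real.norm_eq_abs] at hM₀
  refine ⟨4 * M₀, fun y ⟨hy0, hy1⟩ ↦ ?_⟩
  rcases le_or_gt y (1 / 2) with hy | hy
  · exact hg.abs_le_four_mul hM₀ hy0 hy
  · rw [← hg.apply_one_sub h1 hy0 hy1]
    exact hg.abs_le_four_mul hM₀ (by linarith) (by linarith)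

theorem FundamentalEq.oscillation_le_of_le_half (hg : FundamentalEq g) {x₀ : ℝ}
    (hx₀ : x₀ ∈ Ioo (0 : ℝ) 1) (hc : ContinuousAt g x₀) {V ε : ℝ} (hV : 0 ≤ V) (hε : 0 < ε)
    (hosc : ∀ b ∈ Ioo (0 : ℝ) 1, ∀ᶠ p : ℝ × ℝ in 𝓝 (b, b), |g p.1 - g p.2| ≤ V)
    {b : ℝ} (hb₀ : 0 < b) (hb : b ≤ 1 / 2) :
    ∀ᶠ p : ℝ × ℝ in 𝓝 (b, b), |g p.1 - g p.2| ≤ (1 - x₀ / 2) * V + ε := by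
  obtain ⟨hx₀0, hx₀1⟩ := hx₀
  -- With `x / (1 - b) = x₀` the last term of the equation is continuous at `b`, and the middle
  -- term carries the factor `1 - x ≤ 1 - x₀ / 2`.
  set x := x₀ * (1 - b) with hx
  have hx0 : 0 < x := mul_pos hx₀0 (by linarith)
  have hxx₀ : x₀ / 2 ≤ x := by nlinarith
  have hxb : x + b < 1 := by nlinarith
  have h1x : 0 < 1 - x := by linarith
  set c : ℝ → ℝ := fun u ↦ (1 - u) * g (x / (1 - u))
  have hfe : ∀ u ∈ Ioo 0 (1 - x), g u = g x + (1 - x) * g (u / (1 - x)) - c u := fun u hu ↦ by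
    linarith [hg x u hx0 hu.1 (by linarith [hu.2])]
  have hcb : ContinuousAt c b := by
    refine (continuousAt_const.sub continuousAt_id).mul (hc.comp_of_eq ?_ ?_)
    · fun_prop (disch := exact ne_of_gt (by linarith))
    · rw [hx, mul_div_cancel_right₀ _ (ne_of_gt (by linarith))]
  have hq : b / (1 - x) ∈ Ioo (0 : ℝ) 1 := ⟨by positivity, by rw [div_lt_one h1x]; linarith⟩
  have hk : Tendsto (fun p : ℝ × ℝ ↦ (p.1 / (1 - x), p.2 / (1 - x))) (𝓝 (b, b))
      (𝓝 (b / (1 - x), b / (1 - x))) := Continuous.tendsto' (by fun_prop) _ _ rfl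
  have hscale : ∀ᶠ p : ℝ × ℝ in 𝓝 (b, b), |g (p.1 / (1 - x)) - g (p.2 / (1 - x))| ≤ V :=
    hk.eventually (hosc _ hq)
  have hdom : Ioo 0 (1 - x) ×ˢ Ioo 0 (1 - x) ∈ 𝓝 (b, b) :=
    prod_mem_nhds (Ioo_mem_nhds hb₀ (by linarith)) (Ioo_mem_nhds hb₀ (by linarith))
  filter_upwards [hscale, hcb.eventually_abs_sub_lt hε, hdom] with p hpV hpc ⟨hs, ht⟩
  rw [hfe _ hs, hfe _ ht]
  calc |g x + (1 - x) * g (p.1 / (1 - x)) - c p.1 - (g x + (1 - x) * g (p.2 / (1 - x)) - c p.2)|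
      = |(1 - x) * (g (p.1 / (1 - x)) - g (p.2 / (1 - x))) - (c p.1 - c p.2)| := by
        congr 1; ring
    _ ≤ (1 - x) * V + ε := by
      refine (abs_sub _ _).trans (add_le_add ?_ hpc.le)
      rw [abs_mul, abs_of_pos h1x]
      exact mul_le_mul_of_nonneg_left hpV h1x.le
    _ ≤ (1 - x₀ / 2) * V + ε := by nlinarith

theorem FundamentalEq.oscillation_le (hg : FundamentalEq g) (h1 : g 1 = 0) {x₀ : ℝ}
    (hx₀ : x₀ ∈ Ioo (0 : ℝ) 1) (hc : ContinuousAt g x₀) {V ε : ℝ} (hV : 0 ≤ V) (hε : 0 < ε)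
    (hosc : ∀ b ∈ Ioo (0 : ℝ) 1, ∀ᶠ p : ℝ × ℝ in 𝓝 (b, b), |g p.1 - g p.2| ≤ V)
    {b : ℝ} (hb : b ∈ Ioo (0 : ℝ) 1) :
    ∀ᶠ p : ℝ × ℝ in 𝓝 (b, b), |g p.1 - g p.2| ≤ (1 - x₀ / 2) * V + ε := by
  rcases le_or_gt b (1 / 2) with hb' | hb'
  · exact hg.oscillation_le_of_le_half hx₀ hc hV hε hosc hb.1 hb'
  have hflip : Tendsto (fun p : ℝ × ℝ ↦ (1 - p.1, 1 - p.2)) (𝓝 (b, b)) (𝓝 (1 - b, 1 - b)) :=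
    Continuous.tendsto' (by fun_prop) _ _ rfl
  filter_upwards [hflip.eventually (hg.oscillation_le_of_le_half hx₀ hc hV hε hosc
    (by linarith [hb.2]) (by linarith)), prod_mem_nhds (Ioo_mem_nhds hb.1 hb.2)
    (Ioo_mem_nhds hb.1 hb.2)] with p hp ⟨hs, ht⟩
  rwa [hg.apply_one_sub h1 hs.1 hs.2, hg.apply_one_sub h1 ht.1 ht.2] at hp

theorem FundamentalEq.continuousAt_of_continuousAt (hg : FundamentalEq g) (h1 : g 1 = 0)
    {x₀ : ℝ} (hx₀ : x₀ ∈ Ioo (0 : ℝ) 1) (hc : ContinuousAt g x₀) {M : ℝ}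
    (hM : ∀ y ∈ Ioo (0 : ℝ) 1, |g y| ≤ M) {b : ℝ} (hb : b ∈ Ioo (0 : ℝ) 1) :
    ContinuousAt g b := by
  have hM0 : 0 ≤ M := (abs_nonneg _).trans (hM (1 / 2) ⟨by norm_num, by norm_num⟩)
  have hosc : ∀ ε > 0, ∀ b ∈ Ioo (0 : ℝ) 1, ∀ᶠ p : ℝ × ℝ in 𝓝 (b, b), |g p.1 - g p.2| ≤ ε := by
    refine forall_pos_of_contraction (θ := 1 - x₀ / 2) (M := 2 * M) (by linarith [hx₀.2])
      (by linarith [hx₀.1]) (by positivity)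
      (fun V W hVW hV b hb ↦ (hV b hb).mono fun p hp ↦ hp.trans hVW) (fun b hb ↦ ?_)
      (fun V hV hPV ε hε b hb ↦ hg.oscillation_le h1 hx₀ hc hV hε hPV hb)
    filter_upwards [prod_mem_nhds (Ioo_mem_nhds hb.1 hb.2) (Ioo_mem_nhds hb.1 hb.2)]
      with p ⟨hs, ht⟩
    linarith [abs_sub (g p.1) (g p.2), hM _ hs, hM _ ht]
  rw [Metric.continuousAt_iff']
  intro ε hε
  have hk : Tendsto (fun s ↦ (s, b)) (𝓝 b) (𝓝 (b, b)) := Continuous.tendsto' (by fun_prop) _ _ rfl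
  filter_upwards [hk.eventually (hosc (ε / 2) (by positivity) b hb)] with s hs
  rw [Real.dist_eq]
  linarith

theorem FundamentalEq.eventually_abs_le_half_add (hg : FundamentalEq g)
    (hc : ContinuousAt g (1 / 2)) {V ε : ℝ} (hV : ∀ᶠ y in 𝓝[>] (0 : ℝ), |g y| ≤ V)
    (hε : 0 < ε) : ∀ᶠ y in 𝓝[>] (0 : ℝ), |g y| ≤ 1 / 2 * V + ε := by
  have hrem : Tendsto (fun y ↦ g (1 / 2) - (1 - y) * g (1 / (2 * (1 - y)))) (𝓝[>] 0) (𝓝 0) := by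
    have : ContinuousAt (fun y ↦ g (1 / 2) - (1 - y) * g (1 / (2 * (1 - y)))) 0 :=
      continuousAt_const.sub ((continuousAt_const.sub continuousAt_id).mul
        (hc.comp_of_eq (by fun_prop (disch := norm_num)) (by norm_num)))
    simpa using this.tendsto.mono_left nhdsWithin_le_nhds
  have hdouble : Tendsto (fun y : ℝ ↦ 2 * y) (𝓝[>] 0) (𝓝[>] 0) := by
    refine tendsto_nhdsWithin_of_tendsto_nhds_of_eventually_within _ ?_ ?_
    · simpa using ((continuous_const_mul (2 : ℝ)).tendsto 0).mono_left nhdsWithin_le_nhds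
    · filter_upwards [self_mem_nhdsWithin] with y (hy : 0 < y)
      exact mul_pos two_pos hy
  filter_upwards [hrem.eventually (Metric.ball_mem_nhds 0 hε), hdouble.eventually hV,
    Ioc_mem_nhdsGT (show (0 : ℝ) < 1 / 2 by norm_num)] with y hy hy2 hy'
  rw [Real.dist_eq, sub_zero] at hy
  rw [hg.apply_half hy'.1 hy'.2]
  obtain ⟨hy₁, hy₂⟩ := abs_lt.1 hy
  obtain ⟨hy2₁, hy2₂⟩ := abs_le.1 hy2
  exact abs_le.2 ⟨by linarith, by linarith⟩

theorem FundamentalEq.tendsto_nhdsGT_zero (hg : FundamentalEq g) (hc : ContinuousAt g (1 / 2))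
    {M : ℝ} (hM : ∀ y ∈ Ioo (0 : ℝ) 1, |g y| ≤ M) : Tendsto g (𝓝[>] 0) (𝓝 0) := by
  have hM0 : 0 ≤ M := (abs_nonneg _).trans (hM (1 / 2) ⟨by norm_num, by norm_num⟩)
  have hsmall := forall_pos_of_contraction (by norm_num) (by norm_num) hM0
    (fun V W hVW (hV : ∀ᶠ y in 𝓝[>] (0 : ℝ), |g y| ≤ V) ↦ hV.mono fun y hy ↦ hy.trans hVW)
    (by filter_upwards [Ioo_mem_nhdsGT zero_lt_one] with y hy using hM y hy)
    fun V _ hV ε hε ↦ hg.eventually_abs_le_half_add hc hV hε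
  rw [Metric.tendsto_nhds]
  intro ε hε
  filter_upwards [hsmall (ε / 2) (by positivity)] with y hy
  rw [Real.dist_eq, sub_zero]
  linarith

theorem FundamentalEq.continuousOn_Icc (hg : FundamentalEq g) (h0 : g 0 = 0) (h1 : g 1 = 0)
    {x₀ : ℝ} (hx₀ : x₀ ∈ Ioo (0 : ℝ) 1) (hc : ContinuousAt g x₀) : ContinuousOn g (Icc 0 1) := by
  obtain ⟨M, hM⟩ := hg.exists_bound h1 fun b hb ↦ hg.isBigO_one_of_continuousAt hx₀ hc hb
  have hcont : ∀ b ∈ Ioo (0 : ℝ) 1, ContinuousAt g b :=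
    fun b hb ↦ hg.continuousAt_of_continuousAt h1 hx₀ hc hM hb
  have hlim0 := hg.tendsto_nhdsGT_zero (hcont _ ⟨by norm_num, by norm_num⟩) hM
  have hlim1 : Tendsto g (𝓝[<] 1) (𝓝 0) := by
    have hflip : Tendsto (fun t : ℝ ↦ 1 - t) (𝓝[<] 1) (𝓝[>] 0) := by
      refine tendsto_nhdsWithin_of_tendsto_nhds_of_eventually_within _ ?_ ?_
      · simpa using ((continuous_sub_left (1 : ℝ)).tendsto 1).mono_left nhdsWithin_le_nhds
      · filter_upwards [self_mem_nhdsWithin] with t (ht : t < 1)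
        exact sub_pos.2 ht
    refine (hlim0.comp hflip).congr' ?_
    filter_upwards [Ioo_mem_nhdsLT zero_lt_one] with t ht using hg.apply_one_sub h1 ht.1 ht.2
  rintro t ⟨ht0, ht1⟩
  rcases ht0.eq_or_lt with rfl | ht0
  · refine (continuousWithinAt_Ioi_iff_Ici.1 ?_).mono Icc_subset_Ici_self
    rwa [ContinuousWithinAt, h0]
  rcases ht1.eq_or_lt with rfl | ht1
  · refine (continuousWithinAt_Iio_iff_Iic.1 ?_).mono Icc_subset_Iic_self
    rwa [ContinuousWithinAt, h1]
  exact (hcont t ⟨ht0, ht1⟩).continuousWithinAt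

theorem integral_one_sub_mul_comp_div {x : ℝ} (hx₀ : 0 < x) (hx₁ : x < 1)
    (hcont : ContinuousOn g (Icc x 1)) :
    ∫ y in (0 : ℝ)..(1 - x), (1 - y) * g (x / (1 - y)) = x ^ 2 * ∫ t in x..1, g t / t ^ 3 := by
  have hI : uIcc 0 (1 - x) = Icc 0 (1 - x) := uIcc_of_le (by linarith)
  have hderiv : ∀ y ∈ uIcc 0 (1 - x), HasDerivAt (fun y ↦ x / (1 - y)) (x / (1 - y) ^ 2) y := by
    intro y hy
    rw [hI] at hy
    have h1y : 1 - y ≠ 0 := by linarith [hy.2]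
    exact ((hasDerivAt_const y x).div ((hasDerivAt_id' y).const_sub 1) h1y).congr_deriv (by ring)
  have hmaps : MapsTo (fun y ↦ x / (1 - y)) (uIcc 0 (1 - x)) (Icc x 1) := by
    rw [hI]
    intro y ⟨hy0, hy1⟩
    have h1y : 0 < 1 - y := by linarith
    exact ⟨by rw [le_div_iff₀ h1y]; nlinarith, by rw [div_le_one h1y]; linarith⟩
  have hcube : ContinuousOn (fun t ↦ g t / t ^ 3) (Icc x 1) :=
    hcont.div (by fun_prop) fun t ht ↦ (pow_pos (hx₀.trans_le ht.1) 3).ne'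
  have hsubst := intervalIntegral.integral_comp_mul_deriv' hderiv
    (by rw [hI]; exact continuousOn_const.div (by fun_prop) fun y hy ↦ by nlinarith [hy.2])
    (hcube.mono hmaps.image_subset)
  rw [sub_zero, div_one, sub_sub_cancel, div_self hx₀.ne'] at hsubst
  rw [← hsubst, ← intervalIntegral.integral_const_mul]
  refine intervalIntegral.integral_congr fun y hy ↦ ?_
  rw [hI] at hy
  have h1y : 1 - y ≠ 0 := by linarith [hy.2]
  simp only [Function.comp]
  field_simp

theorem FundamentalEq.integral_identity (hg : FundamentalEq g) (h0 : g 0 = 0)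
    (hcont : ContinuousOn g (Icc 0 1)) {x : ℝ} (hx₀ : 0 < x) (hx₁ : x < 1) :
    (1 - x) * g x + (1 - x) ^ 2 * ∫ t in (0 : ℝ)..1, g t =
      (∫ t in (0 : ℝ)..(1 - x), g t) + x ^ 2 * ∫ t in x..1, g t / t ^ 3 := by
  have h1x : 0 < 1 - x := by linarith
  have hI : uIcc 0 (1 - x) = Icc 0 (1 - x) := uIcc_of_le h1x.le
  have hfe : ∀ y ∈ uIcc 0 (1 - x),
      (1 - y) * g (x / (1 - y)) = g x + (1 - x) * g (y / (1 - x)) - g y := by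
    intro y hy
    rw [hI] at hy
    rcases hy.1.eq_or_lt with rfl | hy0
    · simp [h0]
    · linarith [hg x y hx₀ hy0 (by linarith [hy.2])]
  have hscaled : ContinuousOn (fun y ↦ g (y / (1 - x))) (uIcc 0 (1 - x)) := by
    rw [hI]
    refine hcont.comp (by fun_prop) fun y hy ↦ ⟨div_nonneg hy.1 h1x.le, ?_⟩
    rw [div_le_one h1x]; exact hy.2
  have hg_int : IntervalIntegrable g MeasureTheory.volume 0 (1 - x) := by
    refine (hcont.mono ?_).intervalIntegrable
    rw [hI]
    exact Icc_subset_Icc le_rfl (by linarith)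
  rw [← integral_one_sub_mul_comp_div hx₀ hx₁ (hcont.mono (Icc_subset_Icc hx₀.le le_rfl)),
    intervalIntegral.integral_congr hfe, intervalIntegral.integral_sub
      (intervalIntegrable_const.add (hscaled.intervalIntegrable.const_mul _)) hg_int,
    intervalIntegral.integral_add intervalIntegrable_const (hscaled.intervalIntegrable.const_mul _),
    intervalIntegral.integral_const_mul, intervalIntegral.integral_comp_div _ h1x.ne']
  simp only [intervalIntegral.integral_const, sub_zero, smul_eq_mul, zero_div, div_self h1x.ne',
    add_sub_cancel, add_right_inj]
  ring

theorem hasDerivAt_integral_one_sub (hcont : ContinuousOn g (Icc 0 1)) {x : ℝ} (hx₀ : 0 < x)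
    (hx₁ : x < 1) : HasDerivAt (fun u ↦ ∫ t in (0 : ℝ)..(1 - u), g t) (-g (1 - x)) x := by
  have hmem : 1 - x ∈ Ioo (0 : ℝ) 1 := ⟨by linarith, by linarith⟩
  have hsub : uIcc 0 (1 - x) ⊆ Icc 0 1 := by
    rw [uIcc_of_le hmem.1.le]; exact Icc_subset_Icc le_rfl hmem.2.le
  have hint := intervalIntegral.integral_hasDerivAt_right (hcont.mono hsub).intervalIntegrable
    ((hcont.mono Ioo_subset_Icc_self).stronglyMeasurableAtFilter isOpen_Ioo _ hmem)
    (hcont.continuousAt (Icc_mem_nhds hmem.1 hmem.2))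
  exact (hint.comp x ((hasDerivAt_id' x).const_sub 1)).congr_deriv (by ring)

theorem hasDerivAt_integral_div_cube (hcont : ContinuousOn g (Icc 0 1)) {x : ℝ} (hx₀ : 0 < x)
    (hx₁ : x < 1) : HasDerivAt (fun u ↦ ∫ t in u..1, g t / t ^ 3) (-(g x / x ^ 3)) x := by
  have hc : ContinuousOn (fun t ↦ g t / t ^ 3) (Icc x 1) :=
    (hcont.mono (Icc_subset_Icc hx₀.le le_rfl)).div (by fun_prop)
      fun t ht ↦ (pow_pos (hx₀.trans_le ht.1) 3).ne'
  have hc' : ContinuousOn (fun t ↦ g t / t ^ 3) (Ioo 0 1) :=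
    (hcont.mono Ioo_subset_Icc_self).div (by fun_prop) fun t ht ↦ (pow_pos ht.1 3).ne'
  exact intervalIntegral.integral_hasDerivAt_left
    (hc.intervalIntegrable_of_Icc hx₁.le) (hc'.stronglyMeasurableAtFilter isOpen_Ioo _ ⟨hx₀, hx₁⟩)
    (hc'.continuousAt (Ioo_mem_nhds hx₀ hx₁))

/-- The derivative of a continuous solution, obtained by differentiating `integral_identity` and
eliminating `∫ t in x..1, g t / t ^ 3` with the identity itself. -/
noncomputable def derivFormula (g : ℝ → ℝ) (x : ℝ) : ℝ :=
  (2 * (1 - x) * (∫ t in (0 : ℝ)..1, g t) + (1 - 2 * x) * g x -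
    2 * ∫ t in (0 : ℝ)..(1 - x), g t) / (x * (1 - x))

theorem FundamentalEq.hasDerivAt (hg : FundamentalEq g) (h0 : g 0 = 0) (h1 : g 1 = 0)
    (hcont : ContinuousOn g (Icc 0 1)) {x : ℝ} (hx₀ : 0 < x) (hx₁ : x < 1) :
    HasDerivAt g (derivFormula g x) x := by
  set I := ∫ t in (0 : ℝ)..1, g t
  have hB := hasDerivAt_integral_one_sub hcont hx₀ hx₁
  rw [hg.apply_one_sub h1 hx₀ hx₁] at hB
  have hJ := hasDerivAt_integral_div_cube hcont hx₀ hx₁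
  have h1x : 1 - x ≠ 0 := by linarith
  have hrhs := ((hB.add ((hasDerivAt_pow 2 x).mul hJ)).sub
    ((((hasDerivAt_id' x).const_sub 1).pow 2).mul_const I)).div ((hasDerivAt_id' x).const_sub 1) h1x
  have hev : (fun u ↦ ((∫ t in (0 : ℝ)..(1 - u), g t) + u ^ 2 * (∫ t in u..1, g t / t ^ 3) -
      (1 - u) ^ 2 * I) / (1 - u)) =ᶠ[𝓝 x] g := by
    filter_upwards [Ioo_mem_nhds hx₀ hx₁] with u hu
    rw [div_eq_iff (by linarith [hu.2]), ← hg.integral_identity h0 hcont hu.1 hu.2]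
    ring
  refine (hrhs.congr_of_eventuallyEq hev.symm).congr_deriv ?_
  have hJx : ∫ t in x..1, g t / t ^ 3 =
      ((1 - x) * g x + (1 - x) ^ 2 * I - ∫ t in (0 : ℝ)..(1 - x), g t) / x ^ 2 := by
    rw [hg.integral_identity h0 hcont hx₀ hx₁]
    field_simp
    ring
  simp only [Pi.add_apply, Pi.sub_apply, Pi.mul_apply, Pi.pow_apply]
  rw [derivFormula, hJx]
  field_simp
  ring

theorem FundamentalEq.hasDerivAt_derivFormula (hg : FundamentalEq g) (h0 : g 0 = 0)
    (h1 : g 1 = 0) (hcont : ContinuousOn g (Icc 0 1)) {x : ℝ} (hx₀ : 0 < x) (hx₁ : x < 1) :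
    HasDerivAt (derivFormula g) (-2 * (∫ t in (0 : ℝ)..1, g t) / (x * (1 - x))) x := by
  have hB := hasDerivAt_integral_one_sub hcont hx₀ hx₁
  rw [hg.apply_one_sub h1 hx₀ hx₁] at hB
  have h1x : 1 - x ≠ 0 := by linarith
  have hx : x * (1 - x) ≠ 0 := mul_ne_zero hx₀.ne' h1x
  have := (((((hasDerivAt_id' x).const_sub 1).const_mul 2).mul_const (∫ t in (0 : ℝ)..1, g t)).add
    ((((hasDerivAt_id' x).const_mul 2).const_sub 1).mul (hg.hasDerivAt h0 h1 hcont hx₀ hx₁))).sub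
    (hB.const_mul 2) |>.div ((hasDerivAt_id' x).mul ((hasDerivAt_id' x).const_sub 1)) hx
  refine this.congr_deriv ?_
  simp only [Pi.add_apply, Pi.sub_apply, Pi.mul_apply]
  rw [derivFormula]
  field_simp
  ring

theorem eqOn_zero_of_hasDerivAt_hasDerivAt_zero {h h' : ℝ → ℝ} {a b : ℝ}
    (hc : ContinuousOn h (Icc a b)) (hd : ∀ x ∈ Ioo a b, HasDerivAt h (h' x) x)
    (hd' : ∀ x ∈ Ioo a b, HasDerivAt h' 0 x) (ha : h a = 0) (hb : h b = 0) :
    EqOn h 0 (Icc a b) := by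
  obtain ⟨k, hk⟩ := isOpen_Ioo.exists_is_const_of_deriv_eq_zero isPreconnected_Ioo
    (fun x hx ↦ (hd' x hx).differentiableAt.differentiableWithinAt) fun x hx ↦ (hd' x hx).deriv
  have hlin : ∀ x ∈ Ioc a b, h x = k * (x - a) := by
    rintro x ⟨hax, hxb⟩
    obtain ⟨y, -, hy⟩ := exists_hasDerivAt_eq_slope (fun x ↦ h x - k * (x - a)) (fun _ ↦ 0) hax
      ((hc.mono (Icc_subset_Icc le_rfl hxb)).sub (by fun_prop))
      fun y hy ↦ by
        have hy' : y ∈ Ioo a b := ⟨hy.1, hy.2.trans_le hxb⟩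
        exact ((hd y hy').sub (((hasDerivAt_id' y).sub_const a).const_mul k)).congr_deriv
          (by rw [hk y hy']; ring)
    rw [eq_comm, div_eq_zero_iff, sub_eq_zero] at hy
    rcases hy with hy | hy
    · simp only [ha, sub_self, mul_zero] at hy
      linarith
    · linarith
  rintro x ⟨hax, hxb⟩
  rcases hax.eq_or_lt with rfl | hax
  · exact ha
  have hk0 : k = 0 := by
    have := hlin b ⟨hax.trans_le hxb, le_rfl⟩
    rw [hb, eq_comm, mul_eq_zero] at this
    exact this.resolve_right (by linarith)
  simpa [hk0] using hlin x ⟨hax, hxb⟩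

theorem FundamentalEq.eq_mul_binEntropy (hg : FundamentalEq g) (h0 : g 0 = 0) (h1 : g 1 = 0)
    (hcont : ContinuousOn g (Icc 0 1)) :
    ∀ t ∈ Icc (0 : ℝ) 1, g t = (2 * ∫ s in (0 : ℝ)..1, g s) * Real.binEntropy t := by
  set c := 2 * ∫ s in (0 : ℝ)..1, g s with hc
  have hzero := eqOn_zero_of_hasDerivAt_hasDerivAt_zero
    (h := fun t ↦ g t - c * Real.binEntropy t)
    (h' := fun t ↦ derivFormula g t - c * (Real.log (1 - t) - Real.log t))
    (hcont.sub (by fun_prop))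
    (fun x hx ↦ (hg.hasDerivAt h0 h1 hcont hx.1 hx.2).sub
      ((Real.hasDerivAt_binEntropy hx.1.ne' hx.2.ne).const_mul c))
    (fun x hx ↦ by
      have hx0 : x ≠ 0 := hx.1.ne'
      have h1x : 1 - x ≠ 0 := by linarith [hx.2]
      refine ((hg.hasDerivAt_derivFormula h0 h1 hcont hx.1 hx.2).sub
        ((((hasDerivAt_id' x).const_sub 1).log h1x).sub (Real.hasDerivAt_log hx0)
          |>.const_mul c)).congr_deriv ?_
      rw [hc]
      field_simp
      ring)
    (by simp [h0]) (by simp [h1])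
  intro t ht
  simpa [sub_eq_zero] using hzero ht

theorem FundamentalEq.exists_eq_mul_binEntropy (hg : FundamentalEq g) (h0 : g 0 = 0)
    (h1 : g 1 = 0) (hreg : ∃ x₀ ∈ Ioo (0 : ℝ) 1, ContinuousAt g x₀) :
    ∃ c, ∀ t ∈ Icc (0 : ℝ) 1, g t = c * Real.binEntropy t := by
  obtain ⟨x₀, hx₀, hc⟩ := hreg
  exact ⟨_, hg.eq_mul_binEntropy h0 h1 (hg.continuousOn_Icc h0 h1 hx₀ hc)⟩

theorem mul_binEntropy_div {a b : ℝ} (hab : a + b ≠ 0) :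
    (a + b) * Real.binEntropy (b / (a + b)) =
      (a + b) * Real.log (a + b) - a * Real.log a - b * Real.log b := by
  have hsplit : ∀ u,
      (a + b) * Real.negMulLog (u / (a + b)) = u * Real.log (a + b) - u * Real.log u := by
    intro u
    rw [div_eq_mul_inv, Real.negMulLog_mul, Real.negMulLog, Real.negMulLog, Real.log_inv]
    field_simp
    ring
  rw [Real.binEntropy_eq_negMulLog_add_negMulLog_one_sub, one_sub_div hab, add_sub_cancel_right,
    mul_add, hsplit, hsplit]
  ring

theorem eq_zero_or_of_mul_add_nonpos {x y z : ℝ} (hx : 0 ≤ x) (hy : 0 ≤ y) (hz : 0 ≤ z)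
    (h : x * y + y * z + z * x ≤ 0) : z = 0 ∨ x = 0 ∧ y = 0 := by
  rcases eq_or_ne z 0 with hz0 | hz0
  · exact Or.inl hz0
  have hyz : y * z = 0 := by nlinarith [mul_nonneg hx hy, mul_nonneg hy hz, mul_nonneg hz hx]
  have hzx : z * x = 0 := by nlinarith [mul_nonneg hx hy, mul_nonneg hy hz, mul_nonneg hz hx]
  exact Or.inr ⟨(mul_eq_zero.1 hzx).resolve_left hz0, (mul_eq_zero.1 hyz).resolve_right hz0⟩

def PosHomogeneous (f : ℝ → ℝ → ℝ → ℝ) : Prop :=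
  ∀ lam x y z : ℝ, 0 < lam → 0 ≤ x → 0 ≤ y → 0 ≤ z → 0 < x + y + z →
    f (lam * x) (lam * y) (lam * z) = lam * f x y z

def EntropyEq (f : ℝ → ℝ → ℝ → ℝ) : Prop :=
  ∀ x y z : ℝ, 0 ≤ x → 0 ≤ y → 0 ≤ z → 0 < x * y + y * z + z * x →
    f x y z = f (x + y) z 0 + f x y 0

variable {f : ℝ → ℝ → ℝ → ℝ}

theorem PosHomogeneous.apply_eq_mul (hhom : PosHomogeneous f) {a b : ℝ} (ha : 0 ≤ a)
    (hb : 0 ≤ b) (hab : 0 < a + b) :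
    f a b 0 = (a + b) * f (1 - b / (a + b)) (b / (a + b)) 0 := by
  have h := hhom (a + b) (a / (a + b)) (b / (a + b)) 0 hab (by positivity) (by positivity) le_rfl
    (by rw [add_zero, ← add_div, div_self hab.ne']; exact one_pos)
  rw [one_sub_div hab.ne', add_sub_cancel_right]
  rwa [mul_div_cancel₀ _ hab.ne', mul_div_cancel₀ _ hab.ne', mul_zero] at h

theorem EntropyEq.apply_zero_zero (heq : EntropyEq f)
    (hsym : ∀ x y z : ℝ, 0 ≤ x → 0 ≤ y → 0 ≤ z → 0 < x + y + z → f x y z = f x z y)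
    {a : ℝ} (ha : 0 < a) : f a 0 0 = 0 := by
  have h := heq a 0 a ha.le le_rfl ha.le (by nlinarith)
  rw [hsym a 0 a ha.le le_rfl ha.le (by linarith), add_zero] at h
  linarith

theorem EntropyEq.fundamentalEq (heq : EntropyEq f)
    (hsym : ∀ x y z : ℝ, 0 ≤ x → 0 ≤ y → 0 ≤ z → 0 < x + y + z → f x y z = f x z y)
    (hhom : PosHomogeneous f) : FundamentalEq fun t ↦ f (1 - t) t 0 := by
  intro x y hx hy hxy
  have hu : 0 ≤ 1 - x - y := by linarith
  have hxy' := heq (1 - x - y) y x hu hy.le hx.le (by nlinarith)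
  have hyx := heq (1 - x - y) x y hu hx.le hy.le (by nlinarith)
  rw [hsym (1 - x - y) y x hu hy.le hx.le (by linarith), hyx,
    hhom.apply_eq_mul hu hy.le (by linarith), hhom.apply_eq_mul hu hx.le (by linarith)] at hxy'
  simp only [show 1 - x - y + y = 1 - x by ring, show 1 - x - y + x = 1 - y by ring] at hxy'
  linarith

theorem PosHomogeneous.apply_eq_of_binEntropy (hhom : PosHomogeneous f) {c : ℝ}
    (hc : ∀ t ∈ Icc (0 : ℝ) 1, f (1 - t) t 0 = c * Real.binEntropy t) {a b : ℝ} (ha : 0 ≤ a)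
    (hb : 0 ≤ b) (hab : 0 < a + b) :
    f a b 0 = -c * (a * Real.log a + b * Real.log b - (a + b) * Real.log (a + b)) := by
  rw [hhom.apply_eq_mul ha hb hab, hc _ ⟨by positivity, by rw [div_le_one hab]; linarith⟩,
    mul_left_comm, mul_binEntropy_div hab.ne']
  ring

end Entropy

open Set

theorem stmt_18 (f : ℝ → ℝ → ℝ → ℝ)
    (hsym1 : ∀ x y z : ℝ, 0 ≤ x → 0 ≤ y → 0 ≤ z → 0 < x + y + z →
      f x y z = f y x z)
    (hsym2 : ∀ x y z : ℝ, 0 ≤ x → 0 ≤ y → 0 ≤ z → 0 < x + y + z →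
      f x y z = f x z y)
    (hhom : ∀ lam x y z : ℝ, 0 < lam → 0 ≤ x → 0 ≤ y → 0 ≤ z → 0 < x + y + z →
      f (lam * x) (lam * y) (lam * z) = lam * f x y z)
    (heq : ∀ x y z : ℝ, 0 ≤ x → 0 ≤ y → 0 ≤ z → 0 < x * y + y * z + z * x →
      f x y z = f (x + y) z 0 + f x y 0)
    (hreg : ∃ x₀ ∈ Ioo (0:ℝ) 1, ContinuousAt (fun x => f (1 - x) x 0) x₀) :
    ∃ c : ℝ, ∀ x y z : ℝ, 0 ≤ x → 0 ≤ y → 0 ≤ z → 0 < x + y + z →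
      f x y z = c * (x * Real.log x + y * Real.log y + z * Real.log z -
        (x + y + z) * Real.log (x + y + z)) := by
  have hhom' : Entropy.PosHomogeneous f := hhom
  have heq' : Entropy.EntropyEq f := heq
  have hf00 : f 1 0 0 = 0 := heq'.apply_zero_zero hsym2 one_pos
  obtain ⟨c, hc⟩ := (heq'.fundamentalEq hsym2 hhom').exists_eq_mul_binEntropy
    (by simpa using hf00)
    (by simpa [hsym1 0 1 0 le_rfl zero_le_one le_rfl (by norm_num)] using hf00) hreg
  refine ⟨-c, fun x y z hx hy hz hs ↦ ?_⟩
  by_cases hS : 0 < x * y + y * z + z * x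
  · rw [heq x y z hx hy hz hS, hhom'.apply_eq_of_binEntropy hc (by positivity) hz (by linarith),
      hhom'.apply_eq_of_binEntropy hc hx hy (by nlinarith)]
    ring
  rcases Entropy.eq_zero_or_of_mul_add_nonpos hx hy hz (not_lt.1 hS) with rfl | ⟨rfl, rfl⟩
  · simpa using hhom'.apply_eq_of_binEntropy hc hx hy (by simpa using hs)
  · rw [hsym2 0 0 z le_rfl le_rfl hz hs,
      hhom'.apply_eq_of_binEntropy hc le_rfl hz (by simpa using hs)]
    simp
end

section
/- Suppose f : (0,∞)³ → ℝ satisfies f(x,y,z) = x·log x + y·log y + z·log z + ψ(x+y+z) for some ψ : (0,∞) → ℝ, is positively homogeneous of degree 1, and satisfies the entropy equation f(x,y,z) = f(x+y,z,0) + f(x,y,0) (where f is extended to boundary by the same formula with 0·log 0 = 0). Then ψ(t) = −t·log t for all t > 0. -/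
/-
Evaluating the three terms of the entropy equation with the given form, all the `z log z`,
`x log x`, `y log y` terms and `ψ (x + y + z)` cancel, leaving `0 = c (x + y) log (x + y) + ψ (x + y)`.
Every `t > 0` is such a sum `t / 2 + t / 2`.
-/

lemma psi_add_eq_of_entropy_eq (f : ℝ → ℝ → ℝ → ℝ) (ψ : ℝ → ℝ) (c : ℝ)
    (hform : ∀ x y z : ℝ, 0 ≤ x → 0 ≤ y → 0 ≤ z → 0 < x + y + z →
      f x y z = c * (x * Real.log x + y * Real.log y + z * Real.log z) +
        ψ (x + y + z))
    {x y z : ℝ} (hx : 0 < x) (hy : 0 < y) (hz : 0 < z)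
    (heq : f x y z = f (x + y) z 0 + f x y 0) :
    ψ (x + y) = -(c * ((x + y) * Real.log (x + y))) := by
  rw [hform x y z hx.le hy.le hz.le (by positivity),
    hform (x + y) z 0 (by positivity) hz.le le_rfl (by positivity),
    hform x y 0 hx.le hy.le le_rfl (by positivity)] at heq
  simp only [Real.log_zero, mul_zero, add_zero] at heq
  linarith

theorem stmt_19_general (f : ℝ → ℝ → ℝ → ℝ) (ψ : ℝ → ℝ) (c : ℝ)
    (hform : ∀ x y z : ℝ, 0 ≤ x → 0 ≤ y → 0 ≤ z → 0 < x + y + z →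
      f x y z = c * (x * Real.log x + y * Real.log y + z * Real.log z) +
        ψ (x + y + z))
    (heq : ∀ x y z : ℝ, 0 < x → 0 < y → 0 < z →
      f x y z = f (x + y) z 0 + f x y 0) :
    ∀ t : ℝ, 0 < t → ψ t = -(c * (t * Real.log t)) := by
  intro t ht
  have ht2 : 0 < t / 2 := half_pos ht
  simpa only [add_halves] using
    psi_add_eq_of_entropy_eq f ψ c hform ht2 ht2 one_pos (heq _ _ _ ht2 ht2 one_pos)

theorem stmt_19 (f : ℝ → ℝ → ℝ → ℝ) (ψ : ℝ → ℝ) (c : ℝ)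
    (hform : ∀ x y z : ℝ, 0 ≤ x → 0 ≤ y → 0 ≤ z → 0 < x + y + z →
      f x y z = c * (x * Real.log x + y * Real.log y + z * Real.log z) +
        ψ (x + y + z))
    (hhom : ∀ lam x y z : ℝ, 0 < lam → 0 < x → 0 < y → 0 < z →
      f (lam * x) (lam * y) (lam * z) = lam * f x y z)
    (heq : ∀ x y z : ℝ, 0 < x → 0 < y → 0 < z →
      f x y z = f (x + y) z 0 + f x y 0) :
    ∀ t : ℝ, 0 < t → ψ t = -(c * (t * Real.log t)) :=
  stmt_19_general f ψ c hform heq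
end
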